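/- arXiv:2508.05706 — 8 statements merged into one kernel-verified Lean document; each statement's English description precedes it below -/
import Mathlib

section
/- Let (a_1,...,a_p) and (b_1,...,b_p) be positive real sequences with the same sum of logarithms (i.e., the same product), such that a_i ≥ b_i for all 2 ≤ i ≤ p, and b_1 is the smallest element of {b_1,...,b_p}. Then the sum of the a_i is at least the sum of the b_i. -/
open BigOperators

/-- Weierstrass-type inequality: `1 - ∏ t ≤ ∑ (1 - t i)` for `t i ∈ [0, 1]`. -/
lemma aux_one_sub_prod_le_sum {ι : Type*} [DecidableEq ι] (s : Finset ι) (t : ι → ℝ)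
    (h0 : ∀ i ∈ s, 0 ≤ t i) (h1 : ∀ i ∈ s, t i ≤ 1) :
    1 - ∏ i ∈ s, t i ≤ ∑ i ∈ s, (1 - t i) := by
  induction s using Finset.induction_on with
  | empty => simp
  | @insert j s' hx ih =>
    rw [Finset.prod_insert hx, Finset.sum_insert hx]
    have ih' := ih (fun i hi => h0 i (Finset.mem_insert_of_mem hi))
      (fun i hi => h1 i (Finset.mem_insert_of_mem hi))
    have hj0 : 0 ≤ t j := h0 j (Finset.mem_insert_self _ _)
    have hj1 : t j ≤ 1 := h1 j (Finset.mem_insert_self _ _)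
    have hp0 : 0 ≤ ∏ i ∈ s', t i := Finset.prod_nonneg (fun i hi => h0 i (Finset.mem_insert_of_mem hi))
    have hp1 : ∏ i ∈ s', t i ≤ 1 := Finset.prod_le_one (fun i hi => h0 i (Finset.mem_insert_of_mem hi))
      (fun i hi => h1 i (Finset.mem_insert_of_mem hi))
    nlinarith

/-- If two positive sequences have the same sum of logarithms, `a i ≥ b i` for every
index other than the first, and `b 0` is the smallest of the `b`'s, then `∑ a ≥ ∑ b`. -/
theorem stmt0 {p : ℕ} (a b : Fin (p + 1) → ℝ)
    (ha : ∀ i, 0 < a i) (hb : ∀ i, 0 < b i)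
    (hlog : ∑ i, Real.log (a i) = ∑ i, Real.log (b i))
    (hab : ∀ i, i ≠ 0 → b i ≤ a i)
    (hmin : ∀ i, b 0 ≤ b i) :
    ∑ i, b i ≤ ∑ i, a i := by
  -- products are equal
  have hprod : ∏ i, a i = ∏ i, b i := by
    have := congrArg Real.exp hlog
    rwa [Real.exp_sum, Real.exp_sum,
      Finset.prod_congr rfl (fun i _ => Real.exp_log (ha i)),
      Finset.prod_congr rfl (fun i _ => Real.exp_log (hb i))] at this
  set s : Finset (Fin (p + 1)) := Finset.univ.erase 0 with hs
  have hmem : (0 : Fin (p + 1)) ∈ Finset.univ := Finset.mem_univ _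
  have hsplit_a : ∑ i, a i = a 0 + ∑ i ∈ s, a i := (Finset.add_sum_erase _ _ hmem).symm
  have hsplit_b : ∑ i, b i = b 0 + ∑ i ∈ s, b i := (Finset.add_sum_erase _ _ hmem).symm
  have hprodsplit_a : ∏ i, a i = a 0 * ∏ i ∈ s, a i := (Finset.mul_prod_erase _ _ hmem).symm
  have hprodsplit_b : ∏ i, b i = b 0 * ∏ i ∈ s, b i := (Finset.mul_prod_erase _ _ hmem).symm
  -- t i = b i / a i for i ∈ s
  set t : Fin (p + 1) → ℝ := fun i => b i / a i with ht
  have ht0 : ∀ i ∈ s, 0 ≤ t i := fun i _ => le_of_lt (div_pos (hb i) (ha i))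
  have ht1 : ∀ i ∈ s, t i ≤ 1 := fun i hi =>
    div_le_one_of_le₀ (hab i (Finset.ne_of_mem_erase hi)) (le_of_lt (ha i))
  have hprodpos : 0 < ∏ i ∈ s, a i := Finset.prod_pos (fun i _ => ha i)
  have htprod : ∏ i ∈ s, t i = (∏ i ∈ s, b i) / (∏ i ∈ s, a i) := by
    rw [Finset.prod_div_distrib]
  -- a 0 = b 0 * ∏ t
  have ha0 : a 0 = b 0 * ∏ i ∈ s, t i := by
    rw [htprod]
    field_simp
    rw [hprodsplit_a, hprodsplit_b] at hprod
    linarith [hprod]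
  -- key inequality
  have hkey := aux_one_sub_prod_le_sum s t ht0 ht1
  have hb0 : 0 < b 0 := hb 0
  have hmul : b 0 * (1 - ∏ i ∈ s, t i) ≤ b 0 * ∑ i ∈ s, (1 - t i) :=
    mul_le_mul_of_nonneg_left hkey (le_of_lt hb0)
  -- b 0 * ∑ (1 - t i) ≤ ∑ (a i - b i)
  have hsum2 : b 0 * ∑ i ∈ s, (1 - t i) ≤ ∑ i ∈ s, (a i - b i) := by
    rw [Finset.mul_sum]
    apply Finset.sum_le_sum
    intro i hi
    have h1 : 1 - t i = (a i - b i) / a i := by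
      show 1 - b i / a i = (a i - b i) / a i
      rw [eq_div_iff (ne_of_gt (ha i)), sub_mul, div_mul_cancel₀ _ (ne_of_gt (ha i))]
      ring
    rw [h1]
    have hnn : 0 ≤ (a i - b i) / a i :=
      div_nonneg (by linarith [hab i (Finset.ne_of_mem_erase hi)]) (le_of_lt (ha i))
    calc b 0 * ((a i - b i) / a i) ≤ a i * ((a i - b i) / a i) := by
          apply mul_le_mul_of_nonneg_right _ hnn
          exact le_trans (hmin i) (hab i (Finset.ne_of_mem_erase hi))
      _ = a i - b i := by rw [mul_comm, div_mul_cancel₀ _ (ne_of_gt (ha i))]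
  rw [hsplit_a, hsplit_b]
  have : b 0 - a 0 ≤ ∑ i ∈ s, (a i - b i) := by
    rw [ha0]; nlinarith [hmul, hsum2]
  rw [Finset.sum_sub_distrib] at this
  linarith
end

section
/- Under the hypotheses of the previous statement (positive sequences with equal products, a_i ≥ b_i for i ≥ 2, and b_1 minimal among the b's), equality ∑ a_i = ∑ b_i holds if and only if a_i = b_i for all i. -/
open BigOperators

/-- Under the hypotheses of Lemma 3 (positive sequences with equal sums of logarithms,
`a i ≥ b i` for `i ≥ 2`, and `b 1` minimal among the `b`'s), equality of the sums
`∑ a = ∑ b` holds if and only if `a i = b i` for all `i`. -/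
theorem stmt1 {p : ℕ} (a b : Fin (p + 1) → ℝ)
    (ha : ∀ i, 0 < a i) (hb : ∀ i, 0 < b i)
    (hlog : ∑ i, Real.log (a i) = ∑ i, Real.log (b i))
    (hab : ∀ i, i ≠ 0 → b i ≤ a i)
    (hmin : ∀ i, b 0 ≤ b i) :
    ∑ i, a i = ∑ i, b i ↔ ∀ i, a i = b i := by
  constructor
  · intro hsum
    -- First show a i = b i for all i ≠ 0.
    have key : ∀ i, i ≠ 0 → a i = b i := by
      by_contra hne
      push_neg at hne
      obtain ⟨j, hj0, hj⟩ := hne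
      have hjlt : b j < a j := lt_of_le_of_ne (hab j hj0) (Ne.symm hj)
      have hb0 : (0:ℝ) < b 0 := hb 0
      have hle : ∀ i : Fin (p+1),
          Real.log (a i) - Real.log (b i) ≤ (a i - b i) / b 0 := by
        intro i
        have hlogdiv : Real.log (a i) - Real.log (b i) = Real.log (a i / b i) := by
          rw [Real.log_div (ha i).ne' (hb i).ne']
        have h1 : Real.log (a i / b i) ≤ a i / b i - 1 :=
          Real.log_le_sub_one_of_pos (div_pos (ha i) (hb i))
        have h2 : (a i - b i) / b i = a i / b i - 1 := by
          rw [sub_div, div_self (hb i).ne']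
        by_cases hi : i = 0
        · subst hi
          rw [hlogdiv]
          linarith
        · have h3 : (a i - b i) / b i ≤ (a i - b i) / b 0 :=
            div_le_div_of_nonneg_left (by linarith [hab i hi]) hb0 (hmin i)
          rw [hlogdiv]
          linarith
      have hltj : Real.log (a j) - Real.log (b j) < (a j - b j) / b 0 := by
        have hlogdiv : Real.log (a j) - Real.log (b j) = Real.log (a j / b j) := by
          rw [Real.log_div (ha j).ne' (hb j).ne']
        have h1 : Real.log (a j / b j) < a j / b j - 1 :=
          Real.log_lt_sub_one_of_pos (div_pos (ha j) (hb j))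
            (by
              intro h
              rw [div_eq_one_iff_eq (hb j).ne'] at h
              exact hj h)
        have h2 : (a j - b j) / b j = a j / b j - 1 := by
          rw [sub_div, div_self (hb j).ne']
        have h3 : (a j - b j) / b j ≤ (a j - b j) / b 0 :=
          div_le_div_of_nonneg_left (by linarith) hb0 (hmin j)
        rw [hlogdiv]
        linarith
      have hsumlt : ∑ i, (Real.log (a i) - Real.log (b i)) <
          ∑ i, (a i - b i) / b 0 :=
        Finset.sum_lt_sum (fun i _ => hle i) ⟨j, Finset.mem_univ j, hltj⟩
      have e1 : ∑ i, (Real.log (a i) - Real.log (b i)) = 0 := by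
        rw [Finset.sum_sub_distrib, hlog]; ring
      have e2 : ∑ i, (a i - b i) / b 0 = 0 := by
        rw [← Finset.sum_div, Finset.sum_sub_distrib, hsum]
        simp
      rw [e1, e2] at hsumlt
      exact lt_irrefl 0 hsumlt
    intro i
    by_cases hi : i = 0
    · subst hi
      have heq : ∑ i ∈ Finset.univ.erase 0, a i = ∑ i ∈ Finset.univ.erase 0, b i :=
        Finset.sum_congr rfl (fun i hi => key i (Finset.ne_of_mem_erase hi))
      have h0a := Finset.add_sum_erase Finset.univ a (Finset.mem_univ (0 : Fin (p+1)))
      have h0b := Finset.add_sum_erase Finset.univ b (Finset.mem_univ (0 : Fin (p+1)))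
      rw [← h0a, ← h0b, heq] at hsum
      linarith
    · exact key i hi
  · intro h
    exact Finset.sum_congr rfl (fun i _ => h i)
end

section
/- (Strict Karamata) With the same majorization hypotheses, if f is strictly convex then ∑ f(a_i) = ∑ f(b_i) holds if and only if a_i = b_i for all i. -/
open BigOperators

/-- `a` majorizes `b`: both sorted nondecreasingly, the partial sums of the `k` largest
entries of `a` dominate those of `b` for every `k`, and the total sums agree. -/
def Majorizes {p : ℕ} (a b : Fin p → ℝ) : Prop :=
  Monotone a ∧ Monotone b ∧
    (∀ m : Fin p, ∑ j ∈ Finset.Ici m, b j ≤ ∑ j ∈ Finset.Ici m, a j) ∧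
    (∑ j, a j = ∑ j, b j)


noncomputable def sl (f : ℝ → ℝ) (x y : ℝ) : ℝ := (f y - f x) / (y - x)

lemma sl_comm (f : ℝ → ℝ) (x y : ℝ) : sl f x y = sl f y x := by
  unfold sl
  rw [← neg_div_neg_eq]
  ring_nf

lemma sl_right_lt {f : ℝ → ℝ} (hf : StrictConvexOn ℝ Set.univ f)
    {x y z : ℝ} (hy : y ≠ x) (hz : z ≠ x) (hyz : y < z) :
    sl f x y < sl f x z :=
  hf.secant_strict_mono trivial trivial trivial hy hz hyz

lemma sl_le {f : ℝ → ℝ} (hf : StrictConvexOn ℝ Set.univ f)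
    {x1 y1 x2 y2 : ℝ} (h1 : x1 < y1) (h2 : x2 < y2) (hx : x1 ≤ x2) (hy : y1 ≤ y2) :
    sl f x1 y1 ≤ sl f x2 y2 := by
  have step1 : sl f x1 y1 ≤ sl f x1 y2 := by
    rcases eq_or_lt_of_le hy with h | h
    · rw [h]
    · exact le_of_lt (sl_right_lt hf h1.ne' (h1.trans h).ne' h)
  have step2 : sl f x1 y2 ≤ sl f x2 y2 := by
    rcases eq_or_lt_of_le hx with h | h
    · rw [h]
    · rw [sl_comm f x1 y2, sl_comm f x2 y2]
      exact le_of_lt (sl_right_lt hf (h1.trans_le hy).ne h2.ne h)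
  exact step1.trans step2

lemma sl_lt {f : ℝ → ℝ} (hf : StrictConvexOn ℝ Set.univ f)
    {x1 y1 x2 y2 : ℝ} (h1 : x1 < y1) (h2 : x2 < y2) (hx : x1 < x2) (hy : y1 ≤ y2) :
    sl f x1 y1 < sl f x2 y2 := by
  have step1 : sl f x1 y1 ≤ sl f x1 y2 := by
    rcases eq_or_lt_of_le hy with h | h
    · rw [h]
    · exact le_of_lt (sl_right_lt hf h1.ne' (h1.trans h).ne' h)
  have step2 : sl f x1 y2 < sl f x2 y2 := by
    rw [sl_comm f x1 y2, sl_comm f x2 y2]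
    exact sl_right_lt hf (h1.trans_le hy).ne h2.ne hx
  exact step1.trans_lt step2

lemma sl_mul {f : ℝ → ℝ} {u v : ℝ} (huv : u ≠ v) :
    sl f (min u v) (max u v) * (u - v) = f u - f v := by
  rcases lt_or_gt_of_ne huv with h | h
  · rw [min_eq_left h.le, max_eq_right h.le]
    unfold sl
    rw [div_mul_eq_mul_div, div_eq_iff (sub_ne_zero.mpr h.ne')]
    ring
  · rw [min_eq_right h.le, max_eq_left h.le]
    unfold sl
    rw [div_mul_eq_mul_div, div_eq_iff (sub_ne_zero.mpr h.ne')]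

set_option maxHeartbeats 2000000 in
lemma karamata_strict {p : ℕ} (a b : Fin p → ℝ) (hmaj : Majorizes a b)
    (f : ℝ → ℝ) (hf : StrictConvexOn ℝ Set.univ f) (hne : ∃ i, a i ≠ b i) :
    ∑ i, f (b i) < ∑ i, f (a i) := by
  classical
  obtain ⟨hamono, hbmono, htail, htot⟩ := hmaj
  set D : Finset (Fin p) := Finset.univ.filter (fun i => a i ≠ b i) with hDdef
  have hD : D.Nonempty := by
    obtain ⟨i, hi⟩ := hne; exact ⟨i, by simp [hDdef, hi]⟩
  have hDne : ∀ i ∈ D, a i ≠ b i := by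
    intro i hi; exact (Finset.mem_filter.mp hi).2
  have hDnotin : ∀ i : Fin p, i ∉ D → a i = b i := by
    intro i hi
    by_contra h
    exact hi (Finset.mem_filter.mpr ⟨Finset.mem_univ i, h⟩)
  set i0 : Fin p := D.min' hD with hi0def
  have hi0D : i0 ∈ D := D.min'_mem hD
  -- slope values
  set slv : Fin p → ℝ := fun j => sl f (min (a j) (b j)) (max (a j) (b j)) with hslv
  have hslvmono : ∀ j ∈ D, ∀ j' ∈ D, j ≤ j' → slv j ≤ slv j' := by
    intro j hj j' hj' hle
    exact sl_le hf (min_lt_max.mpr (hDne j hj)) (min_lt_max.mpr (hDne j' hj'))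
      (min_le_min (hamono hle) (hbmono hle)) (max_le_max (hamono hle) (hbmono hle))
  -- filled slope function
  set c : Fin p → ℝ := fun i =>
    if h : (D.filter (· ≤ i)).Nonempty then slv ((D.filter (· ≤ i)).max' h) else slv i0 with hc
  have hcD : ∀ i ∈ D, c i = slv i := by
    intro i hi
    have hne' : (D.filter (· ≤ i)).Nonempty := ⟨i, Finset.mem_filter.mpr ⟨hi, le_refl i⟩⟩
    have hmax : (D.filter (· ≤ i)).max' hne' = i :=
      le_antisymm ((Finset.mem_filter.mp ((D.filter (· ≤ i)).max'_mem hne')).2)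
        (Finset.le_max' (D.filter (· ≤ i)) i (Finset.mem_filter.mpr ⟨hi, le_refl i⟩))
    simp only [hc, dif_pos hne', hmax]
  have hcmono : ∀ i i' : Fin p, i ≤ i' → c i ≤ c i' := by
    intro i i' hii
    have hsub : D.filter (· ≤ i) ⊆ D.filter (· ≤ i') := by
      intro x hx
      exact Finset.mem_filter.mpr ⟨(Finset.mem_filter.mp hx).1,
        le_trans (Finset.mem_filter.mp hx).2 hii⟩
    by_cases h : (D.filter (· ≤ i)).Nonempty
    · have h' : (D.filter (· ≤ i')).Nonempty := h.mono hsub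
      simp only [hc, dif_pos h, dif_pos h']
      exact hslvmono _ (Finset.mem_filter.mp ((D.filter (· ≤ i)).max'_mem h)).1
        _ (Finset.mem_filter.mp ((D.filter (· ≤ i')).max'_mem h')).1
        (Finset.max'_subset h hsub)
    · by_cases h' : (D.filter (· ≤ i')).Nonempty
      · simp only [hc, dif_neg h, dif_pos h']
        exact hslvmono i0 hi0D _ (Finset.mem_filter.mp ((D.filter (· ≤ i')).max'_mem h')).1
          (Finset.min'_le D _ (Finset.mem_filter.mp ((D.filter (· ≤ i')).max'_mem h')).1)
      · simp only [hc, dif_neg h, dif_neg h']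
        exact le_refl _
  -- move to ℕ
  set d : ℕ → ℝ := fun i => if h : i < p then a ⟨i, h⟩ - b ⟨i, h⟩ else 0 with hd
  set C : ℕ → ℝ := fun i => if h : i < p then c ⟨i, h⟩ else 0 with hC
  set G : ℕ → ℝ := fun m => ∑ i ∈ Finset.range m, d i with hG
  have hdval : ∀ j : Fin p, d j.val = a j - b j := by
    intro j
    simp only [hd, dif_pos j.isLt, Fin.eta]
  have hCval : ∀ j : Fin p, C j.val = c j := by
    intro j
    simp only [hC, dif_pos j.isLt, Fin.eta]
  have hGp : G p = 0 := by
    have h1 : G p = ∑ j : Fin p, d j.val := (Fin.sum_univ_eq_sum_range d p).symm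
    rw [h1]
    have h2 : ∀ j : Fin p, d j.val = a j - b j := hdval
    rw [Finset.sum_congr rfl (fun j _ => h2 j), Finset.sum_sub_distrib, htot, sub_self]
  have hGtail : ∀ (m : ℕ) (hm : m < p), G m = -∑ j ∈ Finset.Ici (⟨m, hm⟩ : Fin p), (a j - b j) := by
    intro m hm
    have hsplit : G m + ∑ i ∈ Finset.Ico m p, d i = G p :=
      Finset.sum_range_add_sum_Ico d hm.le
    have hIcofilter : Finset.Ico m p = (Finset.range p).filter (fun i => m ≤ i) := by
      ext x
      simp only [Finset.mem_Ico, Finset.mem_range, Finset.mem_filter]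
      omega
    have hIcifilter : Finset.Ici (⟨m, hm⟩ : Fin p) = Finset.univ.filter (fun j => m ≤ j.val) := by
      ext j
      simp [Fin.le_def]
    have h1 : ∑ i ∈ Finset.Ico m p, d i = ∑ i ∈ Finset.range p, if m ≤ i then d i else 0 := by
      rw [hIcofilter, Finset.sum_filter]
    have h2 : ∑ i ∈ Finset.range p, (if m ≤ i then d i else 0)
        = ∑ j : Fin p, if m ≤ (j : ℕ) then d j.val else 0 :=
      (Fin.sum_univ_eq_sum_range (fun i => if m ≤ i then d i else 0) p).symm
    have h3 : ∑ j ∈ Finset.Ici (⟨m, hm⟩ : Fin p), (a j - b j)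
        = ∑ j : Fin p, if m ≤ (j : ℕ) then d j.val else 0 := by
      rw [hIcifilter, Finset.sum_filter]
      exact Finset.sum_congr rfl (fun j _ => by rw [hdval j])
    have : ∑ i ∈ Finset.Ico m p, d i = ∑ j ∈ Finset.Ici (⟨m, hm⟩ : Fin p), (a j - b j) := by
      rw [h1, h2, h3]
    rw [this] at hsplit
    rw [hGp] at hsplit
    linarith
  have hGle : ∀ m : ℕ, m ≤ p → G m ≤ 0 := by
    intro m hm
    rcases eq_or_lt_of_le hm with h | h
    · rw [h, hGp]
    · rw [hGtail m h]
      have := htail (⟨m, h⟩ : Fin p)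
      rw [Finset.sum_sub_distrib]
      linarith
  -- below i0 everything vanishes
  have hdlow : ∀ i : ℕ, i < i0.val → d i = 0 := by
    intro i hi
    have hip : i < p := lt_trans hi i0.isLt
    have : (⟨i, hip⟩ : Fin p) ∉ D := by
      intro hmem
      have := Finset.min'_le D _ hmem
      rw [← hi0def] at this
      have : i0.val ≤ i := this
      omega
    have heq := hDnotin _ this
    simp only [hd, dif_pos hip, heq, sub_self]
  have hGi0 : G i0.val = 0 :=
    Finset.sum_eq_zero (fun i hi => hdlow i (Finset.mem_range.mp hi))
  have hGi0succ : G (i0.val + 1) = d i0.val := by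
    simp only [hG]
    rw [Finset.sum_range_succ]
    have : ∑ i ∈ Finset.range i0.val, d i = 0 :=
      Finset.sum_eq_zero (fun i hi => hdlow i (Finset.mem_range.mp hi))
    rw [this, zero_add]
  have hdi0neg : d i0.val < 0 := by
    have h1 : d i0.val ≠ 0 := by
      rw [hdval i0]
      exact sub_ne_zero.mpr (hDne i0 hi0D)
    have h2 : G (i0.val + 1) ≤ 0 := hGle _ i0.isLt
    rw [hGi0succ] at h2
    exact lt_of_le_of_ne h2 h1
  -- find first positive d after i0
  have hex : ∃ j, i0.val < j ∧ 0 < d j := by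
    by_contra hcon
    push_neg at hcon
    have hnonpos : ∀ i ∈ Finset.Ico (i0.val + 1) p, d i ≤ 0 := by
      intro i hi
      exact hcon i (by have := Finset.mem_Ico.mp hi; omega)
    have hsplit : G (i0.val + 1) + ∑ i ∈ Finset.Ico (i0.val + 1) p, d i = G p :=
      Finset.sum_range_add_sum_Ico d i0.isLt
    have : ∑ i ∈ Finset.Ico (i0.val + 1) p, d i ≤ 0 := Finset.sum_nonpos hnonpos
    rw [hGp, hGi0succ] at hsplit
    linarith
  set jn := Nat.find hex with hjndef
  obtain ⟨hj1, hj2⟩ : i0.val < jn ∧ 0 < d jn := Nat.find_spec hex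
  have hjmin : ∀ m, m < jn → ¬(i0.val < m ∧ 0 < d m) := fun m hm => Nat.find_min hex hm
  have hjp : jn < p := by
    by_contra h
    push_neg at h
    have : d jn = 0 := by simp only [hd, dif_neg (not_lt.mpr h)]
    linarith
  -- tail sums strictly positive on (i0, jn]
  have hTpos : ∀ m, i0.val + 1 ≤ m → m ≤ jn → G m ≤ d i0.val := by
    intro m hm
    induction m, hm using Nat.le_induction with
    | base => intro _; rw [hGi0succ]
    | succ n hn ih =>
      intro hle
      have hnlt : n < jn := by omega
      have hdn : d n ≤ 0 := by
        have := hjmin n hnlt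
        push_neg at this
        exact this (by omega)
      have : G (n + 1) = G n + d n := Finset.sum_range_succ d n
      have := ih (by omega)
      linarith [Finset.sum_range_succ d n]
  -- strict slope jump
  have hjF : (⟨jn, hjp⟩ : Fin p) ∈ D := by
    have : a ⟨jn, hjp⟩ - b ⟨jn, hjp⟩ > 0 := by
      have := hdval ⟨jn, hjp⟩
      simp only [hd] at this ⊢
      rw [← this]
      exact hj2
    exact Finset.mem_filter.mpr ⟨Finset.mem_univ _, by intro h; rw [h] at this; linarith⟩
  have hbj : b ⟨jn, hjp⟩ < a ⟨jn, hjp⟩ := by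
    have := hdval ⟨jn, hjp⟩
    have h2 : (0:ℝ) < a ⟨jn, hjp⟩ - b ⟨jn, hjp⟩ := by rw [← this]; exact hj2
    linarith
  have hai0 : a i0 < b i0 := by
    have := hdval i0
    rw [this] at hdi0neg
    linarith
  have hi0lt : i0 < (⟨jn, hjp⟩ : Fin p) := by
    rw [Fin.lt_def]
    exact hj1
  have hcjump : c i0 < c ⟨jn, hjp⟩ := by
    rw [hcD i0 hi0D, hcD _ hjF]
    simp only [hslv]
    rw [min_eq_left hai0.le, max_eq_right hai0.le,
        min_eq_right hbj.le, max_eq_left hbj.le]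
    exact sl_lt hf hai0 hbj (lt_of_lt_of_le hai0 (hbmono hi0lt.le))
      (le_of_lt (lt_of_le_of_lt (hbmono hi0lt.le) hbj))
  have hCjump : C i0.val < C jn := by
    rw [hCval i0, show (jn : ℕ) = (⟨jn, hjp⟩ : Fin p).val from rfl, hCval ⟨jn, hjp⟩]
    exact hcjump
  -- C is monotone below p
  have hCmono : ∀ i i' : ℕ, i ≤ i' → i' < p → C i ≤ C i' := by
    intro i i' hii hi'
    have hi : i < p := lt_of_le_of_lt hii hi'
    simp only [hC, dif_pos hi, dif_pos hi']
    exact hcmono _ _ (by rwa [Fin.mk_le_mk])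
  -- existence of a jump index
  have hjumpex : ∃ k, i0.val ≤ k ∧ k < jn ∧ C k < C (k + 1) := by
    by_contra hcon
    push_neg at hcon
    have hdesc : ∀ m, i0.val ≤ m → m ≤ jn → C m ≤ C i0.val := by
      intro m hm
      induction m, hm using Nat.le_induction with
      | base => intro _; exact le_refl _
      | succ n hn ih =>
        intro hle
        have h1 : C (n + 1) ≤ C n := hcon n hn (by omega)
        have h2 : C n ≤ C i0.val := ih (by omega)
        linarith
    have := hdesc jn (le_of_lt hj1) (le_refl jn)
    linarith
  obtain ⟨k, hk1, hk2, hk3⟩ := hjumpex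
  -- main computation
  have hmain : ∑ i, f (a i) - ∑ i, f (b i) = ∑ i ∈ Finset.range p, C i * d i := by
    rw [← Finset.sum_sub_distrib]
    have h1 : ∀ j : Fin p, f (a j) - f (b j) = C j.val * d j.val := by
      intro j
      rw [hCval j, hdval j]
      by_cases hj : j ∈ D
      · rw [hcD j hj]
        exact (sl_mul (hDne j hj)).symm
      · rw [hDnotin j hj]
        simp
    rw [Finset.sum_congr rfl (fun j _ => h1 j)]
    exact Fin.sum_univ_eq_sum_range (fun i => C i * d i) p
  have hparts : ∑ i ∈ Finset.range p, C i * d i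
      = ∑ i ∈ Finset.range (p - 1), (C (i + 1) - C i) * (-G (i + 1)) := by
    have := Finset.sum_range_by_parts C d p
    simp only [smul_eq_mul] at this
    rw [this]
    rw [show (∑ i ∈ Finset.range p, d i) = G p from rfl, hGp, mul_zero, zero_sub]
    rw [← Finset.sum_neg_distrib]
    exact Finset.sum_congr rfl (fun i _ => by rw [show (∑ j ∈ Finset.range (i+1), d j) = G (i+1) from rfl]; ring)
  have hpos : 0 < ∑ i ∈ Finset.range (p - 1), (C (i + 1) - C i) * (-G (i + 1)) := by
    apply Finset.sum_pos'
    · intro i hi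
      have hi' : i + 1 < p := by
        have := Finset.mem_range.mp hi; omega
      apply mul_nonneg
      · have := hCmono i (i + 1) (Nat.le_succ i) hi'
        linarith
      · have := hGle (i + 1) (by omega)
        linarith
    · refine ⟨k, Finset.mem_range.mpr (by omega), ?_⟩
      apply mul_pos
      · linarith
      · have : G (k + 1) ≤ d i0.val := hTpos (k + 1) (by omega) (by omega)
        linarith
  rw [hparts] at hmain
  linarith

/-- Strict Karamata: if `a` majorizes `b` and `f` is strictly convex, then
`∑ f (a i) = ∑ f (b i)` holds if and only if `a i = b i` for all `i`. -/
theorem stmt3 {p : ℕ} (a b : Fin p → ℝ) (hmaj : Majorizes a b)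
    (f : ℝ → ℝ) (hf : StrictConvexOn ℝ Set.univ f) :
    ∑ i, f (a i) = ∑ i, f (b i) ↔ ∀ i, a i = b i := by

  constructor
  · intro heq
    by_contra hcon
    push_neg at hcon
    exact (karamata_strict a b hmaj f hf hcon).ne' heq
  · intro h
    exact Finset.sum_congr rfl (fun i _ => by rw [h i])
end

section
/- Let Σ be a p×p positive definite matrix and for each permutation σ let ω_j^σ = Var(X_j | X_{PRED_j(σ)}) for X ~ N(0, Σ). Suppose ω_1^ι ≤ ω_2^ι ≤ ... ≤ ω_p^ι where ι is the identity permutation. Then for any permutation σ, the nondecreasing rearrangement (v_1,...,v_p) of (ω_1^σ,...,ω_p^σ) satisfies: (log v_1,...,log v_p) majorizes (log ω_1^ι,...,log ω_p^ι). -/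
open Matrix BigOperators

/-- Conditional variance of coordinate `j` of a centered Gaussian vector with covariance `S`,
given the coordinates in the index set `A`, i.e. the Schur complement
`S j j - S_{jA} (S_{AA})⁻¹ S_{Aj}`. -/
noncomputable def condVar {p : ℕ} (S : Matrix (Fin p) (Fin p) ℝ) (j : Fin p)
    (A : Finset (Fin p)) : ℝ :=
  S j j - ∑ s : A, ∑ t : A,
    S j s.1 * (Matrix.of fun a b : A => S a.1 b.1)⁻¹ s t * S t.1 j

/-- The set of predecessors of node `j` under the ordering `σ`. -/
def PRED {p : ℕ} (σ : Equiv.Perm (Fin p)) (j : Fin p) : Finset (Fin p) :=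
  Finset.univ.filter fun i => σ.symm i < σ.symm j

/-! Write `S_C` for the principal submatrix of `S` on `C`. The Schur complement formula gives
`det S_{A ∪ {j}} = Var(X_j | X_A) · det S_A`, so for every ordering `σ` and every set `C` the
product over `j ∈ C` of `Var(X_j | X_{PRED_j(σ) ∩ C})` telescopes to `det S_C`. Conditioning on
more variables lowers the variance: the regression residual `r` of `X_j` on `X_A` minimises
`wᵀ S w` over the vectors with `w_j = 1` supported on `A ∪ {j}`, since `S r` vanishes on `A`.
Hence `∏_{j < m} ω_j^σ ≤ det S_{{0,…,m-1}} = ∏_{j < m} ω_j^ι`, with equality of the full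
products. Taking logarithms, the `m` smallest `log ω^σ` sum to at most the first `m` of the
sorted vector `log ω^ι`, and the totals agree: this is the majorization. -/

open Finset

lemma Monotone.sum_Iio_le_sum_of_card_eq {α β : Type*} [LinearOrder α]
    [LocallyFiniteOrderBot α] [AddCommMonoid β] [PartialOrder β] [IsOrderedAddMonoid β]
    {g : α → β} (hg : Monotone g) {m : α} {V : Finset α} (hV : #V = #(Iio m)) :
    ∑ i ∈ Iio m, g i ≤ ∑ i ∈ V, g i := by
  have hlow : ∑ i ∈ Iio m \ V, g i ≤ #(Iio m \ V) • g m :=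
    sum_le_card_nsmul _ _ _ fun i hi => hg (mem_Iio.mp (mem_sdiff.mp hi).1).le
  have hhigh : #(V \ Iio m) • g m ≤ ∑ i ∈ V \ Iio m, g i :=
    card_nsmul_le_sum _ _ _ fun i hi => hg (not_lt.mp (by simpa using (mem_sdiff.mp hi).2))
  rw [card_sdiff_comm hV.symm] at hlow
  rw [← sum_inter_add_sum_sdiff (Iio m) V, ← sum_inter_add_sum_sdiff V (Iio m), inter_comm]
  exact add_le_add le_rfl (hlow.trans hhigh)

lemma majorizes_of_sum_Iio_le {p : ℕ} (g b : Fin p → ℝ) (π : Equiv.Perm (Fin p))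
    (hg : Monotone fun k => g (π k)) (hb : Monotone b)
    (hhead : ∀ m, ∑ j ∈ Iio m, g j ≤ ∑ j ∈ Iio m, b j) (htot : ∑ j, g j = ∑ j, b j) :
    Majorizes (fun k => g (π k)) b := by
  have htot' : ∑ k, g (π k) = ∑ j, b j := (Equiv.sum_comp π g).trans htot
  refine ⟨hg, hb, fun m => ?_, htot'⟩
  have hsorted : ∑ k ∈ Iio m, g (π k) ≤ ∑ j ∈ Iio m, g j := by
    calc ∑ k ∈ Iio m, g (π k) ≤ ∑ k ∈ (Iio m).map π.symm.toEmbedding, g (π k) :=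
          hg.sum_Iio_le_sum_of_card_eq (card_map _)
      _ = ∑ j ∈ Iio m, g j := by simp [sum_map]
  have hsplit (c : Fin p → ℝ) : ∑ j ∈ Ici m, c j = ∑ j, c j - ∑ j ∈ Iio m, c j := by
    rw [show Ici m = (Iio m)ᶜ by ext; simp, eq_sub_iff_add_eq, sum_compl_add_sum]
  rw [hsplit, hsplit, htot']
  linarith [hhead m, hsorted]

abbrev principalSubmatrix {ι R : Type*} (S : Matrix ι ι R) (A : Finset ι) : Matrix A A R :=
  S.submatrix (↑) (↑)

lemma Finset.sum_mul_dite_mem {ι R : Type*} [Fintype ι] [DecidableEq ι]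
    [NonUnitalNonAssocSemiring R] (A : Finset ι) (f : ι → R) (c : A → R) :
    ∑ k, f k * (if h : k ∈ A then c ⟨k, h⟩ else 0) = ∑ a : A, f a * c a := by
  rw [← sum_subset (subset_univ A) fun k _ hk => by simp [hk], ← sum_coe_sort A]
  simp

section ConditionalVariance

variable {p : ℕ} {S : Matrix (Fin p) (Fin p) ℝ} {A B : Finset (Fin p)} {i j : Fin p}

noncomputable def regressionCoeff (S : Matrix (Fin p) (Fin p) ℝ) (j : Fin p)
    (A : Finset (Fin p)) : A → ℝ :=
  (principalSubmatrix S A)⁻¹ *ᵥ fun a => S a j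

/-- The coefficient vector of `X_j - E[X_j | X_A]`. -/
noncomputable def regressionResidual (S : Matrix (Fin p) (Fin p) ℝ) (j : Fin p)
    (A : Finset (Fin p)) : Fin p → ℝ :=
  Pi.single j 1 - fun i => if h : i ∈ A then regressionCoeff S j A ⟨i, h⟩ else 0

lemma regressionResidual_self (hj : j ∉ A) : regressionResidual S j A j = 1 := by
  simp [regressionResidual, hj]

lemma regressionResidual_of_notMem (hi : i ∉ A) (hij : i ≠ j) :
    regressionResidual S j A i = 0 := by
  simp [regressionResidual, hi, hij]

lemma mulVec_regressionResidual (S : Matrix (Fin p) (Fin p) ℝ) (j : Fin p) (A : Finset (Fin p))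
    (i : Fin p) :
    (S *ᵥ regressionResidual S j A) i = S i j - ∑ a : A, S i a * regressionCoeff S j A a := by
  rw [regressionResidual, mulVec_sub, mulVec_single_one, Pi.sub_apply]
  congr 1
  exact sum_mul_dite_mem A (S i) _

lemma mulVec_regressionResidual_of_mem (hS : S.PosDef) (hi : i ∈ A) :
    (S *ᵥ regressionResidual S j A) i = 0 := by
  have hM : IsUnit (principalSubmatrix S A).det :=
    (isUnit_iff_ne_zero.mpr (hS.submatrix Subtype.val_injective).det_pos.ne')
  have hnormal : principalSubmatrix S A *ᵥ regressionCoeff S j A = fun a : A => S a j := by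
    rw [regressionCoeff, mulVec_mulVec, mul_nonsing_inv _ hM, one_mulVec]
  rw [mulVec_regressionResidual, sub_eq_zero]
  exact (congrFun hnormal ⟨i, hi⟩).symm

lemma mulVec_regressionResidual_self (S : Matrix (Fin p) (Fin p) ℝ) (j : Fin p)
    (A : Finset (Fin p)) : (S *ᵥ regressionResidual S j A) j = condVar S j A := by
  rw [mulVec_regressionResidual, condVar]
  simp only [regressionCoeff, mulVec, dotProduct, mul_sum]
  exact congrArg _ (sum_congr rfl fun s _ => sum_congr rfl fun t _ => (mul_assoc _ _ _).symm)

lemma dotProduct_mulVec_regressionResidual (hS : S.PosDef) (hj : j ∉ A) :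
    regressionResidual S j A ⬝ᵥ S *ᵥ regressionResidual S j A = condVar S j A := by
  rw [dotProduct, sum_eq_single j, regressionResidual_self hj, one_mul,
    mulVec_regressionResidual_self]
  · intro i _ hij
    by_cases hi : i ∈ A
    · rw [mulVec_regressionResidual_of_mem hS hi, mul_zero]
    · rw [regressionResidual_of_notMem hi hij, zero_mul]
  · simp

lemma condVar_pos (hS : S.PosDef) (hj : j ∉ A) : 0 < condVar S j A := by
  have hr : regressionResidual S j A ≠ 0 := fun h => by
    simpa [h] using regressionResidual_self (S := S) hj
  simpa [dotProduct_mulVec_regressionResidual hS hj] using hS.dotProduct_mulVec_pos hr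

lemma condVar_le_dotProduct_mulVec (hS : S.PosDef) (hj : j ∉ A) {w : Fin p → ℝ} (hwj : w j = 1)
    (hw : ∀ i ∉ A, i ≠ j → w i = 0) : condVar S j A ≤ w ⬝ᵥ S *ᵥ w := by
  set r := regressionResidual S j A
  set d := w - r
  have hSsymm : Sᵀ = S := by
    have := hS.1; rwa [IsHermitian, conjTranspose_eq_transpose_of_trivial] at this
  have horth : d ⬝ᵥ S *ᵥ r = 0 := by
    refine sum_eq_zero fun i _ => ?_
    by_cases hi : i ∈ A
    · rw [mulVec_regressionResidual_of_mem hS hi, mul_zero]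
    · have hdi : d i = 0 := by
        by_cases hij : i = j
        · simp [d, r, hij, hwj, regressionResidual_self hj]
        · simp [d, r, hw i hi hij, regressionResidual_of_notMem hi hij]
      rw [hdi, zero_mul]
  have horth' : r ⬝ᵥ S *ᵥ d = 0 := by
    rw [dotProduct_mulVec, ← mulVec_transpose, hSsymm, dotProduct_comm, horth]
  have hd : 0 ≤ d ⬝ᵥ S *ᵥ d := by simpa using hS.posSemidef.dotProduct_mulVec_nonneg d
  calc condVar S j A = r ⬝ᵥ S *ᵥ r := (dotProduct_mulVec_regressionResidual hS hj).symm
    _ ≤ r ⬝ᵥ S *ᵥ r + r ⬝ᵥ S *ᵥ d + d ⬝ᵥ S *ᵥ r + d ⬝ᵥ S *ᵥ d := by linarith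
    _ = w ⬝ᵥ S *ᵥ w := by
      rw [show w = r + d by simp [d]]
      simp only [mulVec_add, dotProduct_add, add_dotProduct]
      ring

lemma condVar_le_condVar_of_subset (hS : S.PosDef) (hAB : A ⊆ B) (hj : j ∉ B) :
    condVar S j B ≤ condVar S j A := by
  have hjA : j ∉ A := fun h => hj (hAB h)
  rw [← dotProduct_mulVec_regressionResidual hS hjA]
  exact condVar_le_dotProduct_mulVec hS hj (regressionResidual_self hjA)
    fun i hi hij => regressionResidual_of_notMem (fun h => hi (hAB h)) hij

lemma det_principalSubmatrix_insert (hS : S.PosDef) (hj : j ∉ A) :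
    (principalSubmatrix S (insert j A)).det = condVar S j A * (principalSubmatrix S A).det := by
  let := (principalSubmatrix S A).invertibleOfIsUnitDet
    (isUnit_iff_ne_zero.mpr (hS.submatrix Subtype.val_injective).det_pos.ne')
  let e : ↥(insert j A) ≃ A ⊕ Unit :=
    (subtypeInsertEquivOption hj).trans (Equiv.optionEquivSumPUnit _)
  have hblocks : principalSubmatrix S (insert j A) =
      (fromBlocks (principalSubmatrix S A) (of fun (a : A) (_ : Unit) => S a j)
        (of fun (_ : Unit) (a : A) => S j a) (of fun _ _ => S j j)).submatrix e e := by
    ext x y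
    simp only [submatrix_apply, e, Equiv.trans_apply, subtypeInsertEquivOption, Equiv.coe_fn_mk]
    split_ifs with hx hy hy <;> simp [hx, hy]
  rw [hblocks, det_submatrix_equiv_self, det_fromBlocks₁₁, mul_comm, det_unique]
  congr 1
  simp only [Matrix.sub_apply, of_apply, mul_apply, invOf_eq_nonsing_inv, condVar, sum_mul]
  rw [sum_comm]
  rfl

lemma notMem_PRED (σ : Equiv.Perm (Fin p)) (j : Fin p) : j ∉ PRED σ j := by
  simp [PRED]

lemma PRED_one (j : Fin p) : PRED 1 j = Iio j := by
  ext i; simp only [PRED, mem_filter, mem_univ, true_and, mem_Iio]; rfl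

/-- Adding the `σ`-last element of `C` multiplies `det S_C` by its conditional variance. -/
lemma prod_condVar_PRED_inter (hS : S.PosDef) (σ : Equiv.Perm (Fin p)) (C : Finset (Fin p)) :
    ∏ j ∈ C, condVar S j (PRED σ j ∩ C) = (principalSubmatrix S C).det := by
  induction C using induction_on_max_value σ.symm with
  | empty => simp
  | insert a C haC hmax ih =>
    have hlast : PRED σ a ∩ insert a C = C := by
      ext i
      simp only [PRED, mem_inter, mem_filter, mem_univ, true_and, mem_insert]
      constructor
      · rintro ⟨hlt, rfl | hi⟩
        exacts [absurd hlt (lt_irrefl _), hi]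
      · intro hi
        exact ⟨(hmax i hi).lt_of_ne fun h => haC (σ.symm.injective h ▸ hi), Or.inr hi⟩
    have hrest : ∀ i ∈ C, PRED σ i ∩ insert a C = PRED σ i ∩ C := fun i hi => by
      ext k
      simp only [PRED, mem_inter, mem_filter, mem_univ, true_and, mem_insert]
      constructor
      · rintro ⟨hlt, rfl | hk⟩
        exacts [absurd (hmax i hi) (not_le.mpr hlt), ⟨hlt, hk⟩]
      · exact fun ⟨hlt, hk⟩ => ⟨hlt, Or.inr hk⟩
    rw [prod_insert haC, hlast, prod_congr rfl fun i hi => by rw [hrest i hi], ih,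
      det_principalSubmatrix_insert hS haC]

lemma prod_condVar_PRED_of_subset (hS : S.PosDef) (σ : Equiv.Perm (Fin p))
    {C : Finset (Fin p)} (hC : ∀ j ∈ C, PRED σ j ⊆ C) :
    ∏ j ∈ C, condVar S j (PRED σ j) = (principalSubmatrix S C).det := by
  rw [← prod_condVar_PRED_inter hS σ C]
  exact prod_congr rfl fun j hj => by rw [inter_eq_left.mpr (hC j hj)]

lemma prod_condVar_PRED_le_det (hS : S.PosDef) (σ : Equiv.Perm (Fin p)) (C : Finset (Fin p)) :
    ∏ j ∈ C, condVar S j (PRED σ j) ≤ (principalSubmatrix S C).det := by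
  rw [← prod_condVar_PRED_inter hS σ C]
  exact prod_le_prod (fun j _ => (condVar_pos hS (notMem_PRED σ j)).le)
    fun j _ => condVar_le_condVar_of_subset hS inter_subset_left (notMem_PRED σ j)

end ConditionalVariance

/-- If the error variances `ω_j^ι = Var(X_j | X_1, …, X_{j-1})` under the identity
ordering are weakly increasing, then for any permutation `σ`, the logarithms of the
nondecreasing rearrangement of `(ω_1^σ, …, ω_p^σ)` majorize `(log ω_1^ι, …, log ω_p^ι)`. -/
theorem stmt9 {p : ℕ} (S : Matrix (Fin p) (Fin p) ℝ) (hS : S.PosDef)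
    (hmono : Monotone fun j => condVar S j (Finset.Iio j))
    (σ : Equiv.Perm (Fin p)) :
    Majorizes
      (fun k => Real.log
        ((fun j => condVar S j (PRED σ j)) (Tuple.sort (fun j => condVar S j (PRED σ j)) k)))
      (fun j => Real.log (condVar S j (Finset.Iio j))) := by
  set f := fun j => condVar S j (PRED σ j)
  have hf : ∀ j, 0 < f j := fun j => condVar_pos hS (notMem_PRED σ j)
  have hω : ∀ j : Fin p, 0 < condVar S j (Iio j) := fun j => condVar_pos hS notMem_Iio_self
  have hprod_ω (C : Finset (Fin p)) (hC : ∀ j ∈ C, Iio j ⊆ C) :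
      ∏ j ∈ C, condVar S j (Iio j) = (principalSubmatrix S C).det := by
    simpa only [PRED_one] using prod_condVar_PRED_of_subset hS 1 (C := C) (by simpa [PRED_one])
  refine majorizes_of_sum_Iio_le (fun j => Real.log (f j)) _ (Tuple.sort f)
    (fun _ _ h => Real.log_le_log (hf _) (Tuple.monotone_sort f h))
    (fun _ _ h => Real.log_le_log (hω _) (hmono h)) (fun m => ?_) ?_
  · rw [← Real.log_prod fun j _ => (hf j).ne', ← Real.log_prod fun j _ => (hω j).ne',
      hprod_ω _ fun j hj => Iio_subset_Iio (mem_Iio.mp hj).le]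
    exact Real.log_le_log (prod_pos fun j _ => hf j) (prod_condVar_PRED_le_det hS σ _)
  · rw [← Real.log_prod fun j _ => (hf j).ne', ← Real.log_prod fun j _ => (hω j).ne',
      hprod_ω _ fun _ _ => subset_univ _, prod_condVar_PRED_of_subset hS σ fun _ _ => subset_univ _]
end

section
/- In a Gaussian linear structural equation model with true DAG G* and true ordering σ* for which error variances are weakly increasing, if a permutation σ is not consistent with G* then ∑_j ω_j^σ > ∑_j ω_j^{σ*}; i.e., the minimum-trace permutation set equals exactly the set of orderings consistent with G*. -/
open Matrix BigOperators

/-- `σ` is consistent with the DAG encoded by the weighted adjacency matrix `B`: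
every edge `i → j` (i.e. `B i j ≠ 0`) goes forward in the ordering `σ`. -/
def Consistent {p : ℕ} (B : Matrix (Fin p) (Fin p) ℝ) (σ : Equiv.Perm (Fin p)) : Prop :=
  ∀ i j, B i j ≠ 0 → σ.symm i < σ.symm j

/-- The covariance matrix `Σ = (I - Bᵀ)⁻¹ Ω (I - B)⁻¹` of the Gaussian linear SEM
`X = Bᵀ X + ε`, `ε ~ N(0, Ω)` with `Ω = diag ω`. -/
noncomputable def modelCov {p : ℕ} (B : Matrix (Fin p) (Fin p) ℝ) (ω : Fin p → ℝ) :
    Matrix (Fin p) (Fin p) ℝ :=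
  (1 - B.transpose)⁻¹ * Matrix.diagonal ω * (1 - B)⁻¹

/-!
Write `modelCov B ω` as the Gram matrix of vectors `semVec B ω j`, so that `condVar` is a squared
distance to a span. For weights `ω` increasing along `σs`, the quantity
`traceBound R = ∑ i ∈ R, ω i * (1 + log (d i / ω i))`, with `d i` the conditional variances along
`σs` inside `R`, is at most the partial trace `∑ i ∈ R, condVar (i | R ∩ PRED τ i)` of every
ordering `τ`: peel off the `τ`-last element `j` of `R`. The product of the `d i` is the Gram
determinant of `R` whatever the ordering, so removing `j` changes the logarithms by amounts weighted
by `ω i ≥ ω j`, and `ω (1 + log (x / ω)) ≤ x` with equality only at `x = ω`.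
On ancestral sets `traceBound R = ∑ i ∈ R, ω i`. If `σ` is not consistent, let `j` be the
`σ`-last node with a child `c` placed before it: all later nodes contribute exactly their `ω`, the
initial segment of `σ` ending at `j` is ancestral, and the child `c` makes
`condVar (j | R \ j) < ω j`, which makes the bound strict.
-/

open Finset RealInnerProductSpace

section Orderings

variable {p : ℕ} {τ : Equiv.Perm (Fin p)} {R : Finset (Fin p)} {i j : Fin p}

lemma mem_PRED : i ∈ PRED τ j ↔ τ.symm i < τ.symm j := by
  simp [PRED]

lemma erase_inter_PRED_of_notMem (h : j ∉ PRED τ i) : R.erase j ∩ PRED τ i = R ∩ PRED τ i := by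
  rw [erase_inter, erase_eq_of_notMem (fun hj => h (mem_inter.1 hj).2)]

lemma inter_PRED_of_max (hmax : ∀ i ∈ R, τ.symm i ≤ τ.symm j) :
    R ∩ PRED τ j = R.erase j := by
  ext x
  simp only [mem_inter, mem_erase, mem_PRED]
  refine ⟨fun ⟨hx, hlt⟩ => ⟨fun h => (h ▸ hlt).false, hx⟩, fun ⟨hne, hx⟩ => ⟨hx, ?_⟩⟩
  exact (hmax x hx).lt_of_ne fun h => hne (τ.symm.injective h)

@[to_additive]
lemma prod_inter_PRED_of_max {M : Type*} [CommMonoid M] (f : Fin p → Finset (Fin p) → M)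
    (hj : j ∈ R) (hmax : ∀ i ∈ R, τ.symm i ≤ τ.symm j) :
    ∏ i ∈ R, f i (R ∩ PRED τ i) =
      f j (R.erase j) * ∏ i ∈ R.erase j, f i (R.erase j ∩ PRED τ i) := by
  rw [← mul_prod_erase R _ hj, inter_PRED_of_max hmax]
  congr 1
  refine prod_congr rfl fun i hi => ?_
  rw [erase_inter_PRED_of_notMem fun h => (mem_PRED.1 h).not_ge (hmax i (mem_of_mem_erase hi))]

def initSeg (τ : Equiv.Perm (Fin p)) (k : Fin p) : Finset (Fin p) :=
  univ.filter fun x => τ.symm x ≤ τ.symm k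

lemma mem_initSeg {k : Fin p} : i ∈ initSeg τ k ↔ τ.symm i ≤ τ.symm k := by
  simp [initSeg]

lemma initSeg_inter_PRED {k : Fin p} (hik : τ.symm i ≤ τ.symm k) :
    initSeg τ k ∩ PRED τ i = PRED τ i :=
  inter_eq_right.2 fun _ hx => mem_initSeg.2 ((mem_PRED.1 hx).trans_le hik).le

lemma PRED_eq_initSeg_erase (τ : Equiv.Perm (Fin p)) (k : Fin p) :
    PRED τ k = (initSeg τ k).erase k := by
  rw [← initSeg_inter_PRED le_rfl, inter_PRED_of_max fun _ => mem_initSeg.1]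

end Orderings

section Gram

variable {E : Type*} [NormedAddCommGroup E] [InnerProductSpace ℝ E] {p : ℕ} {v : Fin p → E}

lemma inner_eq_zero_of_mem_span {s : Set E} {x y : E} (hx : x ∈ Submodule.span ℝ s)
    (h : ∀ u ∈ s, ⟪u, y⟫ = 0) : ⟪x, y⟫ = 0 :=
  (Submodule.isOrtho_span.2 fun u hu _ hw => (Set.mem_singleton_iff.1 hw) ▸ h u hu).inner_eq hx
    (Submodule.mem_span_singleton_self y)

lemma exists_mem_span_image_inner_sub_eq_zero (A : Finset (Fin p)) (x : E) :
    ∃ u ∈ Submodule.span ℝ (v '' A), ∀ a ∈ A, ⟪v a, x - u⟫ = 0 := by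
  let K := Submodule.span ℝ (v '' A)
  have : FiniteDimensional ℝ K := FiniteDimensional.span_of_finite ℝ (A.finite_toSet.image v)
  refine ⟨K.starProjection x, K.starProjection_apply_mem x, fun a ha => ?_⟩
  rw [real_inner_comm]
  exact K.starProjection_inner_eq_zero x _ (Submodule.subset_span ⟨a, ha, rfl⟩)

lemma eq_of_mem_span_of_inner_sub_eq_zero {s : Set E} {x u u' : E}
    (hu : u ∈ Submodule.span ℝ s) (hu' : u' ∈ Submodule.span ℝ s)
    (h : ∀ w ∈ s, ⟪w, x - u⟫ = 0) (h' : ∀ w ∈ s, ⟪w, x - u'⟫ = 0) : u = u' := by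
  have hd : ⟪u' - u, u' - u⟫ = 0 := inner_eq_zero_of_mem_span (Submodule.sub_mem _ hu' hu)
    fun w hw => by rw [← sub_sub_sub_cancel_left u u' x, inner_sub_right, h w hw, h' w hw, sub_zero]
  exact (sub_eq_zero.1 (inner_self_eq_zero.1 hd)).symm

lemma condVar_gram_eq_of_inner_sub_eq_zero (hv : LinearIndependent ℝ v) {A : Finset (Fin p)}
    {j : Fin p} {u : E} (hu : u ∈ Submodule.span ℝ (v '' A))
    (hperp : ∀ a ∈ A, ⟪v a, v j - u⟫ = 0) :
    condVar (gram ℝ v) j A = ‖v j - u‖ ^ 2 := by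
  set G := gram ℝ (fun a : A => v a)
  have hG : IsUnit G.det := (isUnit_iff_isUnit_det G).1
    (posDef_gram_of_linearIndependent (hv.comp _ Subtype.val_injective)).isUnit
  set c := G⁻¹ *ᵥ fun a : A => ⟪v a, v j⟫
  have hGc : G *ᵥ c = fun a : A => ⟪v a, v j⟫ := by
    rw [mulVec_mulVec, mul_nonsing_inv _ hG, one_mulVec]
  have hc_mem : ∑ a : A, c a • v a ∈ Submodule.span ℝ (v '' A) :=
    Submodule.sum_smul_mem _ _ fun a _ => Submodule.subset_span ⟨a, a.2, rfl⟩
  have hc_perp : ∀ a ∈ A, ⟪v a, v j - ∑ b : A, c b • v b⟫ = 0 := by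
    intro a ha
    have h := congrFun hGc ⟨a, ha⟩
    simp only [mulVec, dotProduct, G, gram_apply] at h
    simp only [inner_sub_right, inner_sum, inner_smul_right, mul_comm (c _), h, sub_self]
  obtain rfl : u = ∑ a : A, c a • v a := eq_of_mem_span_of_inner_sub_eq_zero hu hc_mem
    (by rintro _ ⟨a, ha, rfl⟩; exact hperp a ha) (by rintro _ ⟨a, ha, rfl⟩; exact hc_perp a ha)
  have hu_perp : ⟪∑ a : A, c a • v a, v j - ∑ a : A, c a • v a⟫ = 0 :=
    inner_eq_zero_of_mem_span hc_mem (by rintro _ ⟨a, ha, rfl⟩; exact hc_perp a ha)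
  have hnorm : ‖v j - ∑ a : A, c a • v a‖ ^ 2 = ⟪v j, v j⟫ - ∑ a : A, c a * ⟪v a, v j⟫ := by
    rw [← real_inner_self_eq_norm_sq, inner_sub_left, hu_perp, sub_zero, real_inner_comm,
      inner_sub_left, sum_inner]
    simp only [inner_smul_left, RCLike.conj_to_real]
  rw [hnorm, condVar]
  congr 1
  refine sum_congr rfl fun s _ => ?_
  simp only [c, G, gram, mulVec, dotProduct, sum_mul, of_apply]
  refine sum_congr rfl fun t _ => ?_
  rw [real_inner_comm (v s) (v j)]
  ring

lemma condVar_gram_pos (hv : LinearIndependent ℝ v) {A : Finset (Fin p)} {j : Fin p}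
    (hj : j ∉ A) : 0 < condVar (gram ℝ v) j A := by
  obtain ⟨u, hu, hperp⟩ := exists_mem_span_image_inner_sub_eq_zero (v := v) A (v j)
  rw [condVar_gram_eq_of_inner_sub_eq_zero hv hu hperp]
  have : v j - u ≠ 0 := fun h => hv.notMem_span_image (s := A) hj (sub_eq_zero.1 h ▸ hu)
  positivity

lemma condVar_gram_inter_PRED_pos (hv : LinearIndependent ℝ v) (τ : Equiv.Perm (Fin p))
    (A : Finset (Fin p)) (i : Fin p) : 0 < condVar (gram ℝ v) i (A ∩ PRED τ i) :=
  condVar_gram_pos hv fun h => (mem_PRED.1 (mem_inter.1 h).2).false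

lemma condVar_gram_le_of_subset (hv : LinearIndependent ℝ v) {A A' : Finset (Fin p)} (h : A ⊆ A')
    (j : Fin p) : condVar (gram ℝ v) j A' ≤ condVar (gram ℝ v) j A := by
  obtain ⟨u, hu, hperp⟩ := exists_mem_span_image_inner_sub_eq_zero (v := v) A (v j)
  obtain ⟨u', hu', hperp'⟩ := exists_mem_span_image_inner_sub_eq_zero (v := v) A' (v j)
  rw [condVar_gram_eq_of_inner_sub_eq_zero hv hu hperp,
    condVar_gram_eq_of_inner_sub_eq_zero hv hu' hperp']
  have hd : u' - u ∈ Submodule.span ℝ (v '' A') :=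
    Submodule.sub_mem _ hu' (Submodule.span_mono (Set.image_mono (by exact_mod_cast h)) hu)
  have horth : ⟪v j - u', u' - u⟫ = 0 := by
    rw [real_inner_comm]
    exact inner_eq_zero_of_mem_span hd (by rintro _ ⟨a, ha, rfl⟩; exact hperp' a ha)
  have hpyth := norm_add_sq_eq_norm_sq_add_norm_sq_real horth
  rw [sub_add_sub_cancel] at hpyth
  nlinarith [mul_self_nonneg ‖u' - u‖]

lemma condVar_gram_insert_mul (hv : LinearIndependent ℝ v) {C : Finset (Fin p)} {x y : Fin p}
    (hy : y ∉ C) {ux uy : E} (hux : ux ∈ Submodule.span ℝ (v '' C))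
    (hx_perp : ∀ a ∈ C, ⟪v a, v x - ux⟫ = 0) (huy : uy ∈ Submodule.span ℝ (v '' C))
    (hy_perp : ∀ a ∈ C, ⟪v a, v y - uy⟫ = 0) :
    condVar (gram ℝ v) x (insert y C) * condVar (gram ℝ v) y C =
      condVar (gram ℝ v) x C * condVar (gram ℝ v) y C - ⟪v x - ux, v y - uy⟫ ^ 2 := by
  set rx := v x - ux
  set ry := v y - uy
  have hry : condVar (gram ℝ v) y C = ‖ry‖ ^ 2 :=
    condVar_gram_eq_of_inner_sub_eq_zero hv huy hy_perp
  have hry_pos : 0 < ‖ry‖ ^ 2 := hry ▸ condVar_gram_pos hv hy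
  have hspan : Submodule.span ℝ (v '' C) ≤ Submodule.span ℝ (v '' ↑(insert y C)) :=
    Submodule.span_mono (Set.image_mono (by simp))
  have hvy : v y ∈ Submodule.span ℝ (v '' ↑(insert y C)) :=
    Submodule.subset_span ⟨y, mem_insert_self y C, rfl⟩
  -- the foot of the perpendicular from `v x` to the larger span is `ux + t • ry`
  set t := ⟪ry, rx⟫ / ‖ry‖ ^ 2
  have hu : ux + t • ry ∈ Submodule.span ℝ (v '' ↑(insert y C)) :=
    Submodule.add_mem _ (hspan hux) (Submodule.smul_mem _ _ (Submodule.sub_mem _ hvy (hspan huy)))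
  have hres : v x - (ux + t • ry) = rx - t • ry := (sub_sub _ _ _).symm
  have hperp : ∀ a ∈ insert y C, ⟪v a, v x - (ux + t • ry)⟫ = 0 := by
    have horth : ∀ w ∈ Submodule.span ℝ (v '' C), ⟪w, rx⟫ = 0 ∧ ⟪w, ry⟫ = 0 := fun w hw =>
      ⟨inner_eq_zero_of_mem_span hw (by rintro _ ⟨a, ha, rfl⟩; exact hx_perp a ha),
        inner_eq_zero_of_mem_span hw (by rintro _ ⟨a, ha, rfl⟩; exact hy_perp a ha)⟩
    intro a ha
    rw [hres, inner_sub_right, inner_smul_right]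
    rcases mem_insert.1 ha with rfl | ha
    · have hvy : v a = ry + uy := by simp [ry]
      rw [hvy, inner_add_left, inner_add_left, (horth uy huy).1, (horth uy huy).2,
        real_inner_self_eq_norm_sq, add_zero, add_zero, div_mul_cancel₀ _ hry_pos.ne', sub_self]
    · rw [(horth _ (Submodule.subset_span ⟨a, ha, rfl⟩)).1,
        (horth _ (Submodule.subset_span ⟨a, ha, rfl⟩)).2]
      ring
  rw [condVar_gram_eq_of_inner_sub_eq_zero hv hu hperp, hres, hry,
    condVar_gram_eq_of_inner_sub_eq_zero hv hux hx_perp, norm_sub_sq_real, inner_smul_right,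
    norm_smul, mul_pow, Real.norm_eq_abs, sq_abs, show ‖v x - ux‖ = ‖rx‖ from rfl]
  have : ‖ry‖ ≠ 0 := fun h => by simp [h] at hry_pos
  simp only [t, real_inner_comm rx ry]
  field_simp
  ring

lemma condVar_gram_insert_mul_comm (hv : LinearIndependent ℝ v) {C : Finset (Fin p)}
    {x y : Fin p} (hx : x ∉ C) (hy : y ∉ C) :
    condVar (gram ℝ v) x (insert y C) * condVar (gram ℝ v) y C =
      condVar (gram ℝ v) y (insert x C) * condVar (gram ℝ v) x C := by
  obtain ⟨ux, hux, hx_perp⟩ := exists_mem_span_image_inner_sub_eq_zero (v := v) C (v x)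
  obtain ⟨uy, huy, hy_perp⟩ := exists_mem_span_image_inner_sub_eq_zero (v := v) C (v y)
  rw [condVar_gram_insert_mul hv hy hux hx_perp huy hy_perp,
    condVar_gram_insert_mul hv hx huy hy_perp hux hx_perp, real_inner_comm]
  ring

lemma prod_condVar_gram_inter_PRED (hv : LinearIndependent ℝ v) (τ : Equiv.Perm (Fin p))
    (R : Finset (Fin p)) {j : Fin p} (hj : j ∈ R) :
    ∏ i ∈ R, condVar (gram ℝ v) i (R ∩ PRED τ i) = condVar (gram ℝ v) j (R.erase j) *
      ∏ i ∈ R.erase j, condVar (gram ℝ v) i (R.erase j ∩ PRED τ i) := by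
  induction R using Finset.strongInduction generalizing j with
  | H R ih =>
  obtain ⟨s, hs, hmax⟩ := exists_max_image R τ.symm ⟨j, hj⟩
  rw [prod_inter_PRED_of_max _ hs hmax]
  obtain rfl | hjs := eq_or_ne j s
  · rfl
  -- exchange `j` with the `τ`-last element `s`
  have hsj : s ∈ R.erase j := mem_erase.2 ⟨hjs.symm, hs⟩
  have hjs' : j ∈ R.erase s := mem_erase.2 ⟨hjs, hj⟩
  rw [ih _ (erase_ssubset hs) hjs',
    prod_inter_PRED_of_max _ hsj fun i hi => hmax i (mem_of_mem_erase hi), erase_right_comm]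
  have hswap := condVar_gram_insert_mul_comm hv (C := (R.erase j).erase s) (x := s) (y := j)
    (fun h => (mem_erase.1 h).1 rfl) (fun h => (mem_erase.1 (mem_of_mem_erase h)).1 rfl)
  rw [insert_erase hsj, erase_right_comm, insert_erase hjs', ← erase_right_comm] at hswap
  set C := (R.erase j).erase s
  linear_combination (∏ i ∈ C, condVar (gram ℝ v) i (C ∩ PRED τ i)) * hswap

/-- `Var(X_j | X_{R \ j}) = 1 / (Σ_R⁻¹)_{jj}`: here `ζ` is the vector whose coordinates in the
basis `v '' R` form row `j` of `Σ_R⁻¹`. -/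
lemma condVar_gram_erase_eq_inv (hv : LinearIndependent ℝ v) {R : Finset (Fin p)} {j : Fin p}
    (hj : j ∈ R) {ζ : E} (hζ : ζ ∈ Submodule.span ℝ (v '' R))
    (hζv : ∀ a ∈ R, ⟪v a, ζ⟫ = if a = j then 1 else 0) :
    condVar (gram ℝ v) j (R.erase j) = (‖ζ‖ ^ 2)⁻¹ := by
  rw [← insert_erase hj, coe_insert, Set.image_insert_eq, Submodule.mem_span_insert] at hζ
  obtain ⟨c, k, hk, rfl⟩ := hζ
  have hk_perp : ⟪k, c • v j + k⟫ = 0 :=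
    inner_eq_zero_of_mem_span hk (by
      rintro _ ⟨a, ha, rfl⟩
      rw [hζv a (mem_of_mem_erase ha), if_neg (mem_erase.1 ha).1])
  have hvj : ⟪v j, c • v j + k⟫ = 1 := by rw [hζv j hj, if_pos rfl]
  have hc : ‖c • v j + k‖ ^ 2 = c := by
    rw [← real_inner_self_eq_norm_sq, inner_add_left, hk_perp, inner_smul_left, hvj]
    simp
  have hc0 : c ≠ 0 := by
    rintro rfl
    rw [zero_smul, zero_add] at hvj hk_perp
    rw [inner_self_eq_zero.1 hk_perp, inner_zero_right] at hvj
    exact zero_ne_one hvj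
  have hu : -c⁻¹ • k ∈ Submodule.span ℝ (v '' ↑(R.erase j)) := Submodule.smul_mem _ _ hk
  have hres : v j - -c⁻¹ • k = c⁻¹ • (c • v j + k) := by
    rw [smul_add, smul_smul, inv_mul_cancel₀ hc0, one_smul, neg_smul, sub_neg_eq_add]
  rw [condVar_gram_eq_of_inner_sub_eq_zero hv hu fun a ha => by
    rw [hres, inner_smul_right, hζv a (mem_of_mem_erase ha), if_neg (mem_erase.1 ha).1, mul_zero],
    hres, norm_smul, mul_pow, hc, Real.norm_eq_abs, sq_abs]
  field_simp

end Gram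

lemma mul_one_add_log_div_le {a x : ℝ} (ha : 0 < a) (hx : 0 < x) :
    a * (1 + Real.log (x / a)) ≤ x := by
  have := Real.log_le_sub_one_of_pos (div_pos hx ha)
  calc a * (1 + Real.log (x / a)) ≤ a * (x / a) := by gcongr; linarith
    _ = x := mul_div_cancel₀ x ha.ne'

lemma mul_one_add_log_div_lt {a x : ℝ} (ha : 0 < a) (hx : 0 < x) (hxa : x ≠ a) :
    a * (1 + Real.log (x / a)) < x := by
  have := Real.log_lt_sub_one_of_pos (div_pos hx ha) (by rwa [ne_eq, div_eq_one_iff_eq ha.ne'])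
  calc a * (1 + Real.log (x / a)) < a * (x / a) := by gcongr; linarith
    _ = x := mul_div_cancel₀ x ha.ne'

/-- A lower bound, built from the conditional variances along `σs`, for the partial trace
`∑ i ∈ R, condVar S i (R ∩ PRED τ i)` of every ordering `τ`; on ancestral sets of the SEM it
equals `∑ i ∈ R, ω i`. -/
noncomputable def traceBound {p : ℕ} (S : Matrix (Fin p) (Fin p) ℝ) (ω : Fin p → ℝ)
    (σs : Equiv.Perm (Fin p)) (R : Finset (Fin p)) : ℝ :=
  ∑ i ∈ R, ω i * (1 + Real.log (condVar S i (R ∩ PRED σs i) / ω i))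

section TraceBound

variable {E : Type*} [NormedAddCommGroup E] [InnerProductSpace ℝ E] {p : ℕ} {v : Fin p → E}
  {ω : Fin p → ℝ} {σs : Equiv.Perm (Fin p)}

/-- The determinant identity `prod_condVar_gram_inter_PRED` turns the removal of `j` into a
change of logarithms, and monotonicity of `ω` along `σs` bounds their weights by `ω j`. -/
lemma traceBound_le_erase (hv : LinearIndependent ℝ v) (hω : ∀ i, 0 < ω i)
    (hmono : Monotone (ω ∘ σs)) {R : Finset (Fin p)} {j : Fin p} (hj : j ∈ R) :
    traceBound (gram ℝ v) ω σs R ≤ traceBound (gram ℝ v) ω σs (R.erase j) +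
      ω j * (1 + Real.log (condVar (gram ℝ v) j (R.erase j) / ω j)) := by
  set d : Finset (Fin p) → Fin p → ℝ := fun A i => condVar (gram ℝ v) i (A ∩ PRED σs i)
  have hd : ∀ A i, 0 < d A i := condVar_gram_inter_PRED_pos hv σs
  have hvj : 0 < condVar (gram ℝ v) j (R.erase j) := condVar_gram_pos hv (notMem_erase j R)
  have hlog : ∑ i ∈ R.erase j, (Real.log (d (R.erase j) i) - Real.log (d R i)) =
      Real.log (d R j) - Real.log (condVar (gram ℝ v) j (R.erase j)) := by
    have h := congrArg Real.log (prod_condVar_gram_inter_PRED hv σs R hj)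
    rw [← mul_prod_erase R _ hj, Real.log_mul (hd R j).ne' (prod_pos fun i _ => hd R i).ne',
      Real.log_mul hvj.ne' (prod_pos fun i _ => hd _ i).ne',
      Real.log_prod fun i _ => (hd R i).ne', Real.log_prod fun i _ => (hd _ i).ne'] at h
    rw [sum_sub_distrib]
    linarith
  have hterm : ∀ i ∈ R.erase j, ω j * (Real.log (d (R.erase j) i) - Real.log (d R i)) ≤
      ω i * (Real.log (d (R.erase j) i) - Real.log (d R i)) := by
    intro i _
    by_cases hji : j ∈ PRED σs i
    · refine mul_le_mul_of_nonneg_right (by simpa using hmono (mem_PRED.1 hji).le) ?_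
      exact sub_nonneg.2 (Real.log_le_log (hd R i)
        (condVar_gram_le_of_subset hv (inter_subset_inter_right (erase_subset j R)) i))
    · simp only [d, erase_inter_PRED_of_notMem hji, sub_self, mul_zero, le_refl]
  have hsum := sum_le_sum hterm
  rw [← mul_sum, hlog] at hsum
  have hdiff : traceBound (gram ℝ v) ω σs (R.erase j) -
      ∑ i ∈ R.erase j, ω i * (1 + Real.log (d R i / ω i)) =
      ∑ i ∈ R.erase j, ω i * (Real.log (d (R.erase j) i) - Real.log (d R i)) := by
    rw [traceBound, ← sum_sub_distrib]
    refine sum_congr rfl fun i _ => ?_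
    rw [Real.log_div (hd _ i).ne' (hω i).ne', Real.log_div (hd R i).ne' (hω i).ne']
    ring
  rw [traceBound, ← add_sum_erase R _ hj, Real.log_div (hd R j).ne' (hω j).ne',
    Real.log_div hvj.ne' (hω j).ne']
  linarith

lemma traceBound_le_sum_condVar_inter_PRED (hv : LinearIndependent ℝ v) (hω : ∀ i, 0 < ω i)
    (hmono : Monotone (ω ∘ σs)) (τ : Equiv.Perm (Fin p)) (R : Finset (Fin p)) :
    traceBound (gram ℝ v) ω σs R ≤ ∑ i ∈ R, condVar (gram ℝ v) i (R ∩ PRED τ i) := by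
  induction R using Finset.strongInduction with
  | H R ih =>
  obtain rfl | hR := R.eq_empty_or_nonempty
  · simp [traceBound]
  obtain ⟨j, hj, hmax⟩ := exists_max_image R τ.symm hR
  rw [sum_inter_PRED_of_max _ hj hmax, add_comm]
  exact (traceBound_le_erase hv hω hmono hj).trans (add_le_add (ih _ (erase_ssubset hj))
    (mul_one_add_log_div_le (hω j) (condVar_gram_pos hv (notMem_erase j R))))

lemma traceBound_lt_sum_condVar_inter_PRED (hv : LinearIndependent ℝ v) (hω : ∀ i, 0 < ω i)
    (hmono : Monotone (ω ∘ σs)) {τ : Equiv.Perm (Fin p)} {R : Finset (Fin p)} {j : Fin p}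
    (hj : j ∈ R) (hmax : ∀ i ∈ R, τ.symm i ≤ τ.symm j)
    (hne : condVar (gram ℝ v) j (R.erase j) ≠ ω j) :
    traceBound (gram ℝ v) ω σs R < ∑ i ∈ R, condVar (gram ℝ v) i (R ∩ PRED τ i) := by
  rw [sum_inter_PRED_of_max _ hj hmax, add_comm]
  exact (traceBound_le_erase hv hω hmono hj).trans_lt (add_lt_add_of_le_of_lt
    (traceBound_le_sum_condVar_inter_PRED hv hω hmono τ _)
    (mul_one_add_log_div_lt (hω j) (condVar_gram_pos hv (notMem_erase j R)) hne))

end TraceBound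

def IsAncestral {p : ℕ} (B : Matrix (Fin p) (Fin p) ℝ) (R : Finset (Fin p)) : Prop :=
  ∀ a b, B a b ≠ 0 → b ∈ R → a ∈ R

/-- Writing the errors as `ε = √ω ⊙ Z` with `Z` standard Gaussian, `X = (I - B)⁻ᵀ ε` has
`X_j = ⟪semVec B ω j, Z⟫`. -/
noncomputable def semVec {p : ℕ} (B : Matrix (Fin p) (Fin p) ℝ) (ω : Fin p → ℝ) (j : Fin p) :
    EuclideanSpace ℝ (Fin p) :=
  WithLp.toLp 2 fun i => √(ω i) * (1 - B)⁻¹ i j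

section SEM

variable {p : ℕ} {B : Matrix (Fin p) (Fin p) ℝ} {ω : Fin p → ℝ} {σs : Equiv.Perm (Fin p)}

@[simp]
lemma semVec_apply (j i : Fin p) : semVec B ω j i = √(ω i) * (1 - B)⁻¹ i j := rfl

lemma inv_one_sub_transpose (B : Matrix (Fin p) (Fin p) ℝ) : (1 - Bᵀ)⁻¹ = ((1 - B)⁻¹)ᵀ := by
  rw [transpose_nonsing_inv, transpose_sub, transpose_one]

lemma modelCov_eq_gram (hω : ∀ i, 0 ≤ ω i) : modelCov B ω = gram ℝ (semVec B ω) := by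
  ext a b
  rw [modelCov, inv_one_sub_transpose, gram_apply, PiLp.inner_apply]
  simp only [mul_apply, transpose_apply, diagonal_apply, mul_ite, mul_zero, sum_ite_eq',
    mem_univ, if_true, semVec_apply, RCLike.inner_apply, conj_trivial]
  refine sum_congr rfl fun k _ => ?_
  linear_combination (1 - B)⁻¹ k a * (1 - B)⁻¹ k b * (Real.mul_self_sqrt (hω k)).symm

lemma Consistent.diag_eq_zero (h : Consistent B σs) (i : Fin p) : B i i = 0 :=
  not_not.1 fun hB => (h i i hB).false

lemma Consistent.det_one_sub (h : Consistent B σs) : (1 - B).det = 1 := by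
  rw [← det_submatrix_equiv_self σs, det_of_isUpperTriangular]
  · simp [h.diag_eq_zero]
  · intro i k (hki : k < i)
    show (1 - B).submatrix σs σs i k = 0
    have hB : B (σs i) (σs k) = 0 := not_not.1 fun hB => by
      simpa using (h _ _ hB).not_gt (by simpa using hki)
    rw [submatrix_apply, Matrix.sub_apply, Matrix.one_apply_ne (σs.injective.ne hki.ne'), hB,
      sub_zero]

lemma Consistent.isUnit_det_one_sub (h : Consistent B σs) : IsUnit (1 - B).det := by
  rw [h.det_one_sub]
  exact isUnit_one

lemma Consistent.linearIndependent_semVec (h : Consistent B σs) (hω : ∀ i, 0 < ω i) :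
    LinearIndependent ℝ (semVec B ω) := by
  refine linearIndependent_of_det_gram_ne_zero ?_
  rw [← modelCov_eq_gram fun i => (hω i).le, modelCov, inv_one_sub_transpose, det_mul, det_mul,
    det_transpose, det_nonsing_inv, h.det_one_sub, Ring.inverse_one, det_diagonal, one_mul,
    mul_one]
  exact (prod_pos fun i _ => hω i).ne'

lemma Consistent.inv_one_sub_apply_eq_zero (h : Consistent B σs) {R : Finset (Fin p)}
    (hR : IsAncestral B R) {i a : Fin p} (hi : i ∉ R) (ha : a ∈ R) : (1 - B)⁻¹ i a = 0 := by
  have : Invertible (1 - B) := (1 - B).invertibleOfIsUnitDet h.isUnit_det_one_sub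
  have hBT : (1 - B).BlockTriangular fun x => if x ∈ R then 0 else 1 := by
    intro x y hxy
    have hx : x ∉ R := fun hx => by simp [hx] at hxy
    have hy : y ∈ R := by by_contra hy; simp [hy, hx] at hxy
    have hB : B x y = 0 := not_not.1 fun hB => hx (hR x y hB hy)
    rw [Matrix.sub_apply, Matrix.one_apply_ne (ne_of_mem_of_not_mem hy hx).symm, hB, sub_zero]
  exact blockTriangular_inv_of_blockTriangular hBT (by simp [hi, ha])

lemma Consistent.single_mem_span_semVec (h : Consistent B σs) {R : Finset (Fin p)}
    (hR : IsAncestral B R) {i : Fin p} (hi : i ∈ R) :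
    EuclideanSpace.single i (√(ω i)) ∈ Submodule.span ℝ (semVec B ω '' R) := by
  have hsum : EuclideanSpace.single i (√(ω i)) = ∑ l ∈ R, (1 - B) l i • semVec B ω l := by
    ext k
    have hinv : ∑ l ∈ R, (1 - B)⁻¹ k l * (1 - B) l i = (1 : Matrix (Fin p) (Fin p) ℝ) k i := by
      rw [Finset.sum_subset (subset_univ R), ← mul_apply, nonsing_inv_mul _ h.isUnit_det_one_sub]
      intro l _ hl
      have hB : B l i = 0 := not_not.1 fun hB => hl (hR l i hB hi)
      rw [Matrix.sub_apply, Matrix.one_apply_ne (ne_of_mem_of_not_mem hi hl).symm, hB, sub_zero,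
        mul_zero]
    simp only [PiLp.single_apply, WithLp.ofLp_sum, WithLp.ofLp_smul, Finset.sum_apply,
      Pi.smul_apply, smul_eq_mul]
    have hrhs : ∑ l ∈ R, (1 - B) l i * semVec B ω l k =
        √(ω k) * ∑ l ∈ R, (1 - B)⁻¹ k l * (1 - B) l i := by
      rw [mul_sum]
      exact sum_congr rfl fun l _ => by rw [semVec_apply]; ring
    rw [hrhs, hinv, Matrix.one_apply]
    split_ifs with hki <;> simp [hki]
  rw [hsum]
  exact Submodule.sum_smul_mem _ _ fun l hl => Submodule.subset_span ⟨l, hl, rfl⟩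

lemma sum_sq_one_sub_apply_div {R : Finset (Fin p)} {j : Fin p} (hj : j ∈ R) (hB : B j j = 0) :
    ∑ i ∈ R, (1 - B) j i ^ 2 / ω i = (ω j)⁻¹ + ∑ i ∈ R, B j i ^ 2 / ω i := by
  rw [← add_sum_erase R _ hj, ← add_sum_erase R (fun i => B j i ^ 2 / ω i) hj, hB,
    Matrix.sub_apply, Matrix.one_apply_eq, hB]
  simp only [sub_zero, one_pow, one_div, ne_eq, OfNat.ofNat_ne_zero, not_false_eq_true,
    zero_pow, zero_div, zero_add]
  congr 1
  refine sum_congr rfl fun i hi => ?_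
  rw [Matrix.sub_apply, Matrix.one_apply_ne (ne_of_mem_erase hi).symm, zero_sub, neg_sq]

/-- The inverse is the diagonal entry of the precision matrix `(I - B) Ω⁻¹ (I - B)ᵀ` of the
sub-model on `R`. -/
lemma Consistent.condVar_modelCov_erase (h : Consistent B σs) (hω : ∀ i, 0 < ω i)
    {R : Finset (Fin p)} (hR : IsAncestral B R) {j : Fin p} (hj : j ∈ R) :
    condVar (modelCov B ω) j (R.erase j) = ((ω j)⁻¹ + ∑ i ∈ R, B j i ^ 2 / ω i)⁻¹ := by
  set ζ : EuclideanSpace ℝ (Fin p) :=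
    ∑ i ∈ R, ((1 - B) j i / ω i) • EuclideanSpace.single i (√(ω i))
  have hsqrt : ∀ k, √(ω k) ≠ 0 := fun k => (Real.sqrt_pos.2 (hω k)).ne'
  have hζ : ∀ k, ζ k = if k ∈ R then (1 - B) j k / √(ω k) else 0 := by
    intro k
    simp only [ζ, WithLp.ofLp_sum, WithLp.ofLp_smul, Finset.sum_apply, Pi.smul_apply, smul_eq_mul,
      PiLp.single_apply, mul_ite, mul_zero, sum_ite_eq]
    split_ifs
    · rw [eq_div_iff (hsqrt k), mul_assoc, Real.mul_self_sqrt (hω k).le,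
        div_mul_cancel₀ _ (hω k).ne']
    · rfl
  rw [modelCov_eq_gram fun i => (hω i).le, condVar_gram_erase_eq_inv
    (h.linearIndependent_semVec hω) hj (ζ := ζ)
    (Submodule.sum_smul_mem _ _ fun i hi => h.single_mem_span_semVec hR hi),
    ← sum_sq_one_sub_apply_div hj (h.diag_eq_zero j), EuclideanSpace.norm_sq_eq]
  · simp only [hζ, Real.norm_eq_abs, sq_abs, ite_pow, ne_eq, OfNat.ofNat_ne_zero,
      not_false_eq_true, zero_pow, sum_ite_mem, univ_inter, div_pow, Real.sq_sqrt (hω _).le]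
  · intro a ha
    have hinv : ∑ k ∈ R, (1 - B) j k * (1 - B)⁻¹ k a = (1 : Matrix (Fin p) (Fin p) ℝ) j a := by
      rw [Finset.sum_subset (subset_univ R), ← mul_apply, mul_nonsing_inv _ h.isUnit_det_one_sub]
      intro k _ hk
      rw [h.inv_one_sub_apply_eq_zero hR hk ha, mul_zero]
    rw [PiLp.inner_apply, ← sum_subset (subset_univ R) fun k _ hk => by simp [hζ, hk],
      show (if a = j then (1 : ℝ) else 0) = (1 : Matrix (Fin p) (Fin p) ℝ) j a by
        simp [Matrix.one_apply, eq_comm], ← hinv]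
    refine sum_congr rfl fun k hk => ?_
    rw [hζ, if_pos hk, semVec_apply, RCLike.inner_apply, conj_trivial]
    field_simp [hsqrt k]

lemma Consistent.condVar_modelCov_erase_eq (h : Consistent B σs) (hω : ∀ i, 0 < ω i)
    {R : Finset (Fin p)} (hR : IsAncestral B R) {j : Fin p} (hj : j ∈ R)
    (hch : ∀ c ∈ R, B j c = 0) : condVar (modelCov B ω) j (R.erase j) = ω j := by
  rw [h.condVar_modelCov_erase hω hR hj, sum_eq_zero fun c hc => by simp [hch c hc], add_zero,
    inv_inv]

lemma Consistent.condVar_modelCov_erase_lt (h : Consistent B σs) (hω : ∀ i, 0 < ω i)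
    {R : Finset (Fin p)} (hR : IsAncestral B R) {j c : Fin p} (hj : j ∈ R) (hc : c ∈ R)
    (hjc : B j c ≠ 0) : condVar (modelCov B ω) j (R.erase j) < ω j := by
  have hsum : 0 < ∑ i ∈ R, B j i ^ 2 / ω i :=
    sum_pos' (fun i _ => div_nonneg (sq_nonneg _) (hω i).le)
      ⟨c, hc, div_pos (by positivity) (hω c)⟩
  rw [h.condVar_modelCov_erase hω hR hj]
  calc _ < ((ω j)⁻¹)⁻¹ := inv_strictAnti₀ (inv_pos.2 (hω j)) (lt_add_of_pos_right _ hsum)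
    _ = ω j := inv_inv _

lemma Consistent.condVar_modelCov_inter_PRED (h : Consistent B σs) (hω : ∀ i, 0 < ω i)
    {R : Finset (Fin p)} (hR : IsAncestral B R) {i : Fin p} (hi : i ∈ R) :
    condVar (modelCov B ω) i (R ∩ PRED σs i) = ω i := by
  have hi' : i ∉ R ∩ PRED σs i := fun h' => (mem_PRED.1 (mem_inter.1 h').2).false
  have hanc : IsAncestral B (insert i (R ∩ PRED σs i)) := by
    intro a b hab hb
    refine mem_insert_of_mem (mem_inter.2 ⟨hR a b hab ?_, mem_PRED.2 ?_⟩) <;>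
      rcases mem_insert.1 hb with rfl | hb
    exacts [hi, (mem_inter.1 hb).1, h a b hab, (h a b hab).trans (mem_PRED.1 (mem_inter.1 hb).2)]
  rw [← erase_insert hi']
  refine h.condVar_modelCov_erase_eq hω hanc (mem_insert_self _ _) fun c hc => ?_
  by_contra hB
  rcases mem_insert.1 hc with rfl | hc
  · exact hB (h.diag_eq_zero c)
  · exact (h i c hB).asymm (mem_PRED.1 (mem_inter.1 hc).2)

lemma Consistent.traceBound_modelCov (h : Consistent B σs) (hω : ∀ i, 0 < ω i)
    {R : Finset (Fin p)} (hR : IsAncestral B R) :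
    traceBound (modelCov B ω) ω σs R = ∑ i ∈ R, ω i :=
  sum_congr rfl fun i hi => by
    rw [h.condVar_modelCov_inter_PRED hω hR hi, div_self (hω i).ne', Real.log_one, add_zero,
      mul_one]

end SEM

section ReversedEdge

variable {p : ℕ} {B : Matrix (Fin p) (Fin p) ℝ} {ω : Fin p → ℝ} {σs σ : Equiv.Perm (Fin p)}
  {j : Fin p}

lemma exists_max_reversed_edge (hdiag : ∀ i, B i i = 0) (hσ : ¬ Consistent B σ) :
    ∃ j c, B j c ≠ 0 ∧ σ.symm c < σ.symm j ∧
      ∀ a b, B a b ≠ 0 → σ.symm b < σ.symm a → σ.symm a ≤ σ.symm j := by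
  classical
  simp only [Consistent, not_forall, not_lt] at hσ
  obtain ⟨a, b, hab, hba⟩ := hσ
  have hT : (univ.filter fun a => ∃ b, B a b ≠ 0 ∧ σ.symm b < σ.symm a).Nonempty :=
    ⟨a, mem_filter.2 ⟨mem_univ a, b, hab, hba.lt_of_ne fun e => by
      rw [σ.symm.injective e] at hab
      exact hab (hdiag a)⟩⟩
  obtain ⟨j, hj, hmax⟩ := exists_max_image _ σ.symm hT
  obtain ⟨c, hjc, hcj⟩ := (mem_filter.1 hj).2
  exact ⟨j, c, hjc, hcj, fun a b hab hba => hmax a (mem_filter.2 ⟨mem_univ a, b, hab, hba⟩)⟩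

variable (hmax : ∀ a b, B a b ≠ 0 → σ.symm b < σ.symm a → σ.symm a ≤ σ.symm j)
include hmax

lemma isAncestral_initSeg {k : Fin p} (hjk : σ.symm j ≤ σ.symm k) :
    IsAncestral B (initSeg σ k) := by
  intro a b hab hb
  rw [mem_initSeg] at hb ⊢
  rcases lt_or_ge (σ.symm b) (σ.symm a) with hba | hab'
  · exact (hmax a b hab hba).trans hjk
  · exact hab'.trans hb

lemma Consistent.condVar_modelCov_PRED_of_lt (h : Consistent B σs) (hω : ∀ i, 0 < ω i)
    {x : Fin p} (hjx : σ.symm j < σ.symm x) :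
    condVar (modelCov B ω) x (PRED σ x) = ω x := by
  rw [PRED_eq_initSeg_erase]
  refine h.condVar_modelCov_erase_eq hω (isAncestral_initSeg hmax hjx.le) (mem_initSeg.2 le_rfl)
    fun c hc => ?_
  by_contra hB
  rcases (mem_initSeg.1 hc).lt_or_eq with hcx | hcx
  · exact (hmax x c hB hcx).not_gt hjx
  · exact hB (σ.symm.injective hcx ▸ h.diag_eq_zero x)

lemma Consistent.sum_lt_sum_condVar_modelCov_PRED (h : Consistent B σs) (hω : ∀ i, 0 < ω i)
    (hmono : Monotone (ω ∘ σs)) {c : Fin p} (hjc : B j c ≠ 0) (hcj : σ.symm c < σ.symm j) :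
    ∑ x ∈ initSeg σ j, ω x < ∑ x ∈ initSeg σ j, condVar (modelCov B ω) x (PRED σ x) := by
  have hR := isAncestral_initSeg hmax le_rfl
  rw [← h.traceBound_modelCov hω hR, modelCov_eq_gram fun i => (hω i).le]
  calc _ < ∑ x ∈ initSeg σ j, condVar (gram ℝ (semVec B ω)) x (initSeg σ j ∩ PRED σ x) :=
        traceBound_lt_sum_condVar_inter_PRED (h.linearIndependent_semVec hω) hω hmono
          (mem_initSeg.2 le_rfl) (fun _ => mem_initSeg.1) (by
            rw [← modelCov_eq_gram fun i => (hω i).le]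
            exact (h.condVar_modelCov_erase_lt hω hR (mem_initSeg.2 le_rfl)
              (mem_initSeg.2 hcj.le) hjc).ne)
    _ = _ := sum_congr rfl fun x hx => by rw [initSeg_inter_PRED (mem_initSeg.1 hx)]

end ReversedEdge

/-- In a Gaussian linear SEM with true DAG `G*` (encoded by `B`), true causal ordering
`σ*`, and error variances weakly increasing with respect to `σ*`, every permutation `σ`
not consistent with `G*` has strictly larger total error variance than `σ*`; i.e. the
minimum-trace permutations are exactly the orderings consistent with `G*`. -/
theorem stmt11 {p : ℕ} (B : Matrix (Fin p) (Fin p) ℝ) (ω : Fin p → ℝ)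
    (hω : ∀ j, 0 < ω j)
    (σs : Equiv.Perm (Fin p)) (hσs : Consistent B σs)
    (hinc : Monotone fun k =>
      condVar (modelCov B ω) (σs k) (PRED σs (σs k)))
    (σ : Equiv.Perm (Fin p)) (hσ : ¬ Consistent B σ) :
    ∑ j, condVar (modelCov B ω) j (PRED σs j) <
      ∑ j, condVar (modelCov B ω) j (PRED σ j) := by
  have hωσs : ∀ i, condVar (modelCov B ω) i (PRED σs i) = ω i := fun i => by
    simpa using hσs.condVar_modelCov_inter_PRED hω (R := univ) (fun _ _ _ _ => mem_univ _)
      (mem_univ i)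
  have hmono : Monotone (ω ∘ σs) := by simpa only [hωσs, Function.comp_def] using hinc
  obtain ⟨j, c, hjc, hcj, hmax⟩ := exists_max_reversed_edge hσs.diag_eq_zero hσ
  simp only [hωσs]
  rw [← sum_add_sum_compl (initSeg σ j), ← sum_add_sum_compl (initSeg σ j),
    sum_congr rfl fun x hx => hσs.condVar_modelCov_PRED_of_lt hmax hω
      (not_le.1 fun h => mem_compl.1 hx (mem_initSeg.2 h))]
  exact add_lt_add_left (hσs.sum_lt_sum_condVar_modelCov_PRED hmax hω hmono hjc hcj) _
end

section
/- In a Gaussian DAG model, if σ is consistent with the true DAG G* (i.e., all edges of G* go forward in σ), then for every node j the conditional variance of X_j given all predecessors under σ equals the conditional variance of X_j given its parents in G*: Var(X_j | X_{PRED_j(σ)}) = Var(X_j | X_{PA_j(G*)}). -/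
open Matrix BigOperators

/-- The parent set of node `j` in the DAG encoded by `B`. -/
noncomputable def PA {p : ℕ} (B : Matrix (Fin p) (Fin p) ℝ) (j : Fin p) : Finset (Fin p) :=
  Finset.univ.filter fun i => B i j ≠ 0

/-!
If `σ` is consistent with `B`, then `1 - B` is triangular with unit diagonal in the order `σ`, so
`ε = (1 - Bᵀ) X` has `X_a` uncorrelated with `ε_j` for every predecessor `a` of `j`. Hence, for any
`A` with `PA B j ⊆ A ⊆ PRED σ j`, the column `B_{·j}` solves the normal equations
`Σ_{AA} β = Σ_{Aj}` of the regression of `X_j` on `X_A`, and the residual variance is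
`Var ε_j = ω j`, independently of `A`.
-/

theorem condVar_eq_sub_mulVec {p : ℕ} {S : Matrix (Fin p) (Fin p) ℝ} {j : Fin p}
    {A : Finset (Fin p)} (hA : IsUnit (S.submatrix ((↑) : A → Fin p) (↑)).det)
    {β : Fin p → ℝ} (hβ : ∀ i ∉ A, β i = 0) (hnormal : ∀ a ∈ A, (S *ᵥ β) a = S a j) :
    condVar S j A = S j j - (S *ᵥ β) j := by
  set T : Matrix A A ℝ := S.submatrix ((↑) : A → Fin p) (↑)
  have hsum (f : Fin p → ℝ) : ∑ s : A, f s * β s = f ⬝ᵥ β :=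
    (Finset.sum_coe_sort A fun i => f i * β i).trans <| Fintype.sum_subset fun i hfi =>
      by_contra fun hi => hfi (by rw [hβ i hi, mul_zero])
  have hTβ : T *ᵥ (β ∘ (↑)) = fun s : A => S s j := by
    ext s
    rw [← hnormal s s.2]
    exact hsum _
  have hcoef (s : A) : ∑ t : A, T⁻¹ s t * S t j = β s := by
    have := congrFun (congrArg (T⁻¹ *ᵥ ·) hTβ) s
    rw [mulVec_mulVec, nonsing_inv_mul _ hA, one_mulVec] at this
    exact this.symm
  change S j j - ∑ s : A, ∑ t : A, S j s * T⁻¹ s t * S t j = S j j - S j ⬝ᵥ β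
  rw [← hsum]
  simp_rw [mul_assoc, ← Finset.mul_sum, hcoef]

theorem modelCov_eq_conjTranspose_mul {p : ℕ} (B : Matrix (Fin p) (Fin p) ℝ) (ω : Fin p → ℝ) :
    modelCov B ω = ((1 - B)⁻¹)ᴴ * diagonal ω * (1 - B)⁻¹ := by
  rw [modelCov, conjTranspose_eq_transpose_of_trivial, transpose_nonsing_inv, transpose_sub,
    transpose_one]

namespace Consistent

variable {p : ℕ} {B : Matrix (Fin p) (Fin p) ℝ} {σ : Equiv.Perm (Fin p)} {ω : Fin p → ℝ}

theorem blockTriangular_one_sub (hσ : Consistent B σ) : (1 - B).BlockTriangular σ.symm := by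
  intro i j hji
  have hij : i ≠ j := by rintro rfl; exact lt_irrefl _ hji
  have hB : B i j = 0 := by_contra fun h => lt_asymm hji (hσ i j h)
  simp [hij, hB]

theorem det_one_sub_s12 (hσ : Consistent B σ) : (1 - B).det = 1 := by
  have hup : ((1 - B).submatrix σ σ).IsUpperTriangular := by
    have := hσ.blockTriangular_one_sub.submatrix (f := σ)
    simp only [Function.comp_def, Equiv.symm_apply_apply] at this
    exact this
  rw [← det_submatrix_equiv_self σ, det_of_isUpperTriangular hup]
  refine Finset.prod_eq_one fun i _ => ?_
  have hB : B (σ i) (σ i) = 0 := by_contra fun h => lt_irrefl _ (hσ _ _ h)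
  simp [hB]

theorem isUnit_det_one_sub_s12 (hσ : Consistent B σ) : IsUnit (1 - B).det := by
  simp [hσ.det_one_sub_s12]

theorem inv_one_sub_apply_of_le (hσ : Consistent B σ) {a j : Fin p}
    (h : σ.symm a ≤ σ.symm j) : (1 - B)⁻¹ j a = (1 : Matrix (Fin p) (Fin p) ℝ) j a := by
  have := Matrix.invertibleOfIsUnitDet _ hσ.isUnit_det_one_sub_s12
  have htri := blockTriangular_inv_of_blockTriangular hσ.blockTriangular_one_sub
  -- In `((1 - B)⁻¹ * B) j a`, a nonzero `B k a` puts `k` before `j`, where `(1 - B)⁻¹ j k = 0`.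
  have hexp : (1 - B)⁻¹ = 1 + (1 - B)⁻¹ * B := by
    have hinv := Matrix.nonsing_inv_mul _ hσ.isUnit_det_one_sub_s12
    rw [Matrix.mul_sub, Matrix.mul_one] at hinv
    exact eq_add_of_sub_eq hinv
  rw [hexp, Matrix.add_apply, add_eq_left, mul_apply]
  refine Finset.sum_eq_zero fun k _ => ?_
  by_cases hB : B k a = 0
  · simp [hB]
  · simp [htri ((hσ k a hB).trans_le h)]

theorem posDef_modelCov (hσ : Consistent B σ) (hω : ∀ j, 0 < ω j) : (modelCov B ω).PosDef := by
  rw [modelCov_eq_conjTranspose_mul]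
  refine (PosDef.diagonal hω).conjTranspose_mul_mul_same (mulVec_injective_of_isUnit ?_)
  exact (isUnit_iff_isUnit_det _).mpr (isUnit_nonsing_inv_det _ hσ.isUnit_det_one_sub_s12)

/-- `Σ (1 - B)` is the cross-covariance of `X` with the noise `ε = (1 - Bᵀ) X`. -/
theorem modelCov_mul_one_sub_apply_of_le (hσ : Consistent B σ) {a j : Fin p}
    (h : σ.symm a ≤ σ.symm j) : (modelCov B ω * (1 - B)) a j = diagonal ω a j := by
  have hcov : modelCov B ω * (1 - B) = (1 - B)⁻¹ᵀ * diagonal ω := by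
    rw [modelCov, Matrix.mul_assoc, nonsing_inv_mul _ hσ.isUnit_det_one_sub_s12, Matrix.mul_one,
      transpose_nonsing_inv, transpose_sub, transpose_one]
  rw [hcov, mul_diagonal, transpose_apply, hσ.inv_one_sub_apply_of_le h]
  by_cases haj : a = j
  · subst haj; simp
  · simp [haj, Ne.symm haj]

theorem condVar_modelCov (hσ : Consistent B σ) (hω : ∀ j, 0 < ω j) {j : Fin p}
    {A : Finset (Fin p)} (hPA : PA B j ⊆ A) (hA : A ⊆ PRED σ j) :
    condVar (modelCov B ω) j A = ω j := by
  set S := modelCov B ω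
  have hresidual (a : Fin p) : (S *ᵥ fun i => B i j) a = S a j - (S * (1 - B)) a j := by
    rw [Matrix.mul_sub, Matrix.mul_one, Matrix.sub_apply, sub_sub_cancel]
    rfl
  have hdet : IsUnit (S.submatrix ((↑) : A → Fin p) (↑)).det :=
    ((hσ.posDef_modelCov hω).submatrix Subtype.val_injective).det_pos.ne'.isUnit
  have hsupp (i : Fin p) (hi : i ∉ A) : B i j = 0 := by
    by_contra hB
    exact hi (hPA (by simpa [PA] using hB))
  have hnormal (a : Fin p) (ha : a ∈ A) : (S *ᵥ fun i => B i j) a = S a j := by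
    have hlt : σ.symm a < σ.symm j := by simpa [PRED] using hA ha
    rw [hresidual, hσ.modelCov_mul_one_sub_apply_of_le hlt.le,
      diagonal_apply_ne _ (ne_of_apply_ne σ.symm hlt.ne), sub_zero]
  rw [condVar_eq_sub_mulVec hdet hsupp hnormal, hresidual,
    hσ.modelCov_mul_one_sub_apply_of_le le_rfl, diagonal_apply_eq, sub_sub_cancel]

end Consistent

/-- If `σ` is consistent with the true DAG `G*`, then for every node `j` the conditional
variance of `X_j` given all its predecessors under `σ` equals the conditional variance of
`X_j` given its parents in `G*`. -/
theorem stmt12 {p : ℕ} (B : Matrix (Fin p) (Fin p) ℝ) (ω : Fin p → ℝ)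
    (hω : ∀ j, 0 < ω j)
    (σ : Equiv.Perm (Fin p)) (hσ : Consistent B σ) (j : Fin p) :
    condVar (modelCov B ω) j (PRED σ j) = condVar (modelCov B ω) j (PA B j) := by
  have hPA : PA B j ⊆ PRED σ j := fun i hi => by
    simp only [PA, PRED, Finset.mem_filter, Finset.mem_univ, true_and] at hi ⊢
    exact hσ i j hi
  rw [hσ.condVar_modelCov hω hPA le_rfl, hσ.condVar_modelCov hω le_rfl hPA]
end

section
/- In a Gaussian DAG model, if σ is a permutation not consistent with G*, and k* is the largest node (in the true topological numbering 1,...,p) having a parent j* with σ^{-1}(k*) < σ^{-1}(j*), then Var(X_{k*} | X_{PRED_{k*}(σ)}) > Var(X_{k*} | X_{PA_{k*}(G*)}), strictly. -/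
open Matrix BigOperators

/-! With `N = (1 - B)⁻¹`, a residual `X k - ∑ s ∈ A, b s • X s` with coefficient vector `c` has
variance `∑ i, ω i * (N c) i ^ 2`, and `condVar` is the least such variance over all `b`.
Regressing `X k` on its parents with `b s = B s k` gives `N c = Pi.single k 1`, hence variance
`ω k`. For any regression of `X ks` on `PRED σ ks` we have `(N c) ks = 1`, since `N ks m ≠ 0` only
for descendants `m` of `ks`, none of which precedes `ks` in `σ` by maximality of `ks`; and
`N c ≠ Pi.single ks 1`, since otherwise `c = (1 - B) (Pi.single ks 1)` would give weight
`-B js ks ≠ 0` to `js ∉ PRED σ ks`. The extra nonzero coordinate of `N c` pushes the variance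
strictly above `ω ks`. -/

section ExtendVal

variable {n : Type*} [Fintype n]

lemma extend_val_dotProduct (A : Finset n) (b : A → ℝ) (v : n → ℝ) :
    Function.extend Subtype.val b 0 ⬝ᵥ v = b ⬝ᵥ fun s : A => v s := by
  simp only [dotProduct]
  rw [← Finset.sum_subset A.subset_univ fun i _ hi => ?_, ← Finset.sum_coe_sort A]
  · simp only [Subtype.val_injective.extend_apply]
  · rw [Function.extend_apply' _ _ _ (by simpa using hi), Pi.zero_apply, zero_mul]

lemma extend_val_dotProduct_mulVec_extend_val (S : Matrix n n ℝ) (A : Finset n)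
    (b b' : A → ℝ) :
    Function.extend Subtype.val b 0 ⬝ᵥ (S *ᵥ Function.extend Subtype.val b' 0) =
      b ⬝ᵥ (S.submatrix (↑) (↑) *ᵥ b') := by
  rw [extend_val_dotProduct]
  congr 1
  ext s
  simp only [mulVec, dotProduct_comm (fun j => S s j), extend_val_dotProduct, submatrix_apply]
  exact dotProduct_comm _ _

end ExtendVal

section Residual

variable {n : Type*} [DecidableEq n]

/-- Coefficients of the residual `X j - ∑ s ∈ A, b s • X s`. -/
noncomputable def residualCoeff (j : n) (A : Finset n) (b : A → ℝ) : n → ℝ :=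
  Pi.single j 1 - Function.extend Subtype.val b 0

lemma residualCoeff_apply_of_notMem {j i : n} {A : Finset n} (b : A → ℝ) (hi : i ∉ A) :
    residualCoeff j A b i = (Pi.single j 1 : n → ℝ) i := by
  rw [residualCoeff, Pi.sub_apply, Function.extend_apply' _ _ _ (by simpa using hi),
    Pi.zero_apply, sub_zero]

lemma residualCoeff_dotProduct_mulVec [Fintype n] {S : Matrix n n ℝ} (hS : S.IsSymm) (j : n)
    (A : Finset n) (b : A → ℝ) :
    residualCoeff j A b ⬝ᵥ (S *ᵥ residualCoeff j A b) =
      S j j - 2 * (b ⬝ᵥ fun s : A => S s j) + b ⬝ᵥ (S.submatrix (↑) (↑) *ᵥ b) := by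
  have hrow : Pi.single j 1 ⬝ᵥ (S *ᵥ Function.extend Subtype.val b 0) =
      b ⬝ᵥ fun s : A => S s j := by
    rw [single_dotProduct, one_mul, mulVec, dotProduct_comm, extend_val_dotProduct]
    simp only [hS.apply]
  have hcol : Function.extend Subtype.val b 0 ⬝ᵥ (S *ᵥ Pi.single j 1) =
      b ⬝ᵥ fun s : A => S s j := by
    rw [mulVec_single_one, extend_val_dotProduct]
    rfl
  rw [residualCoeff, mulVec_sub, dotProduct_sub, sub_dotProduct, sub_dotProduct, hrow, hcol,
    extend_val_dotProduct_mulVec_extend_val, mulVec_single_one, single_dotProduct, one_mul]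
  simp only [col_apply]
  ring

end Residual

lemma Matrix.PosSemidef.dotProduct_mulVec_sub_two_mul_le {m : Type*} [Fintype m]
    {T : Matrix m m ℝ} (hT : T.PosSemidef) {x r : m → ℝ} (hx : T *ᵥ x = r) (y : m → ℝ) :
    x ⬝ᵥ (T *ᵥ x) - 2 * (x ⬝ᵥ r) ≤ y ⬝ᵥ (T *ᵥ y) - 2 * (y ⬝ᵥ r) := by
  have hsymm : x ⬝ᵥ (T *ᵥ y) = y ⬝ᵥ r := by
    rw [dotProduct_mulVec, ← hT.isHermitian.eq, conjTranspose_eq_transpose_of_trivial,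
      vecMul_transpose, dotProduct_comm, hx]
  have hnonneg := hT.dotProduct_mulVec_nonneg (y - x)
  simp only [star_trivial, mulVec_sub, dotProduct_sub, sub_dotProduct, hx, hsymm] at hnonneg
  rw [hx]
  linarith [dotProduct_comm x r, dotProduct_comm y r]

section CondVar

variable {p : ℕ} {S : Matrix (Fin p) (Fin p) ℝ}

lemma condVar_eq_sub_dotProduct (hS : S.IsSymm) (j : Fin p) (A : Finset (Fin p)) :
    condVar S j A = S j j -
      (S.submatrix (↑) (↑))⁻¹ *ᵥ (fun s : A => S s j) ⬝ᵥ fun s : A => S s j := by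
  simp only [condVar, dotProduct, mulVec, Finset.sum_mul]
  congr 1
  refine Finset.sum_congr rfl fun s _ => Finset.sum_congr rfl fun t _ => ?_
  rw [hS.apply s j]
  exact mul_rotate _ _ _

lemma condVar_eq_residualCoeff_dotProduct_mulVec (hS : S.PosDef) (j : Fin p)
    (A : Finset (Fin p)) :
    condVar S j A =
      residualCoeff j A ((S.submatrix (↑) (↑))⁻¹ *ᵥ fun s : A => S s j) ⬝ᵥ
        (S *ᵥ residualCoeff j A ((S.submatrix (↑) (↑))⁻¹ *ᵥ fun s : A => S s j)) := by
  have hT : IsUnit (S.submatrix ((↑) : A → Fin p) (↑)).det :=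
    (isUnit_iff_isUnit_det _).mp (hS.submatrix Subtype.val_injective).isUnit
  have hsymm := isHermitian_iff_isSymm.mp hS.isHermitian
  rw [residualCoeff_dotProduct_mulVec hsymm, mulVec_mulVec, mul_nonsing_inv _ hT, one_mulVec,
    condVar_eq_sub_dotProduct hsymm]
  ring

lemma condVar_le_residualCoeff_dotProduct_mulVec (hS : S.PosDef) (j : Fin p)
    (A : Finset (Fin p)) (b : A → ℝ) :
    condVar S j A ≤ residualCoeff j A b ⬝ᵥ (S *ᵥ residualCoeff j A b) := by
  set T := S.submatrix ((↑) : A → Fin p) ((↑) : A → Fin p)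
  have hx : T *ᵥ (T⁻¹ *ᵥ fun s : A => S s j) = fun s : A => S s j := by
    rw [mulVec_mulVec, mul_nonsing_inv _ ((isUnit_iff_isUnit_det _).mp
      (hS.submatrix Subtype.val_injective).isUnit), one_mulVec]
  have hmin := (hS.submatrix Subtype.val_injective).posSemidef.dotProduct_mulVec_sub_two_mul_le
    hx b
  have hsymm := isHermitian_iff_isSymm.mp hS.isHermitian
  rw [condVar_eq_residualCoeff_dotProduct_mulVec hS, residualCoeff_dotProduct_mulVec hsymm,
    residualCoeff_dotProduct_mulVec hsymm]
  linarith

end CondVar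

lemma lt_sum_mul_sq {ι : Type*} [Fintype ι] {w v : ι → ℝ} (hw : ∀ i, 0 < w i) {k m : ι}
    (hk : v k = 1) (hmk : m ≠ k) (hm : v m ≠ 0) : w k < ∑ i, w i * v i ^ 2 :=
  calc w k < w k * v k ^ 2 + w m * v m ^ 2 := by
        rw [hk]; linarith [mul_pos (hw m) (by positivity : 0 < v m ^ 2)]
    _ ≤ ∑ i, w i * v i ^ 2 :=
        Finset.add_le_sum (fun i _ => mul_nonneg (hw i).le (sq_nonneg _))
          (Finset.mem_univ k) (Finset.mem_univ m) hmk.symm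

section LinearSEM

variable {p : ℕ} {B : Matrix (Fin p) (Fin p) ℝ}

lemma det_one_sub_eq_one (hB : ∀ i j, B i j ≠ 0 → i < j) : (1 - B).det = 1 := by
  have hdiag : ∀ i, B i i = 0 := fun i => by_contra fun h => (hB i i h).false
  rw [det_of_isUpperTriangular fun i j (hji : j < i) => ?_]
  · simp [hdiag]
  · rw [Matrix.sub_apply, one_apply_ne hji.ne', zero_sub, neg_eq_zero]
    exact by_contra fun h => (hB i j h).asymm hji

lemma isUnit_det_one_sub (hB : ∀ i j, B i j ≠ 0 → i < j) : IsUnit (1 - B).det :=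
  det_one_sub_eq_one hB ▸ isUnit_one

lemma inv_one_sub_eq (hB : ∀ i j, B i j ≠ 0 → i < j) :
    (1 - B)⁻¹ = 1 + (1 - B)⁻¹ * B := by
  have h := nonsing_inv_mul _ (isUnit_det_one_sub hB)
  rw [mul_sub, mul_one] at h
  exact sub_eq_iff_eq_add.mp h

lemma reflTransGen_of_inv_one_sub_apply_ne_zero (hB : ∀ i j, B i j ≠ 0 → i < j) {i j : Fin p}
    (h : (1 - B)⁻¹ i j ≠ 0) : Relation.ReflTransGen (fun a b => B a b ≠ 0) i j := by
  induction j using WellFoundedLT.induction with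
  | ind j ih =>
    by_cases hij : i = j
    · exact hij ▸ .refl
    rw [inv_one_sub_eq hB, Matrix.add_apply, one_apply_ne hij, zero_add, mul_apply] at h
    obtain ⟨k, -, hk⟩ := Finset.exists_ne_zero_of_sum_ne_zero h
    have hkj : B k j ≠ 0 := right_ne_zero_of_mul hk
    exact (ih k (hB k j hkj) (left_ne_zero_of_mul hk)).tail hkj

lemma le_of_reflTransGen (hB : ∀ i j, B i j ≠ 0 → i < j) {i j : Fin p}
    (h : Relation.ReflTransGen (fun a b => B a b ≠ 0) i j) : i ≤ j := by
  induction h with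
  | refl => exact le_rfl
  | tail _ hkj ih => exact ih.trans (hB _ _ hkj).le

lemma inv_one_sub_apply_self (hB : ∀ i j, B i j ≠ 0 → i < j) (i : Fin p) :
    (1 - B)⁻¹ i i = 1 := by
  rw [inv_one_sub_eq hB, Matrix.add_apply, one_apply_eq, mul_apply, add_eq_left]
  refine Finset.sum_eq_zero fun k _ => by_contra fun hk => ?_
  exact (hB k i (right_ne_zero_of_mul hk)).not_ge <| le_of_reflTransGen hB <|
    reflTransGen_of_inv_one_sub_apply_ne_zero hB (left_ne_zero_of_mul hk)

variable (B) in
lemma modelCov_eq_transpose_mul_mul (ω : Fin p → ℝ) :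
    modelCov B ω = (1 - B)⁻¹ᵀ * diagonal ω * (1 - B)⁻¹ := by
  rw [modelCov, transpose_nonsing_inv, transpose_sub, transpose_one]

variable (B) in
lemma dotProduct_modelCov_mulVec (ω : Fin p → ℝ) (c : Fin p → ℝ) :
    c ⬝ᵥ (modelCov B ω *ᵥ c) = ∑ i, ω i * ((1 - B)⁻¹ *ᵥ c) i ^ 2 := by
  rw [modelCov_eq_transpose_mul_mul, ← mulVec_mulVec, ← mulVec_mulVec, dotProduct_mulVec,
    vecMul_transpose]
  simp only [dotProduct, mulVec_diagonal]
  exact Finset.sum_congr rfl fun i _ => by ring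

lemma modelCov_posDef (hB : ∀ i j, B i j ≠ 0 → i < j) {ω : Fin p → ℝ}
    (hω : ∀ j, 0 < ω j) :
    (modelCov B ω).PosDef := by
  rw [modelCov_eq_transpose_mul_mul, ← conjTranspose_eq_transpose_of_trivial]
  exact (PosDef.diagonal hω).conjTranspose_mul_mul_same
    (mulVec_injective_of_isUnit ((isUnit_iff_isUnit_det _).mpr
      (isUnit_nonsing_inv_det_iff.mpr (isUnit_det_one_sub hB))))

end LinearSEM

section Reversal

variable {p : ℕ} {B : Matrix (Fin p) (Fin p) ℝ}

lemma condVar_modelCov_PA_le (hB : ∀ i j, B i j ≠ 0 → i < j) {ω : Fin p → ℝ}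
    (hω : ∀ j, 0 < ω j) (k : Fin p) : condVar (modelCov B ω) k (PA B k) ≤ ω k := by
  have hextend : Function.extend Subtype.val (fun s : PA B k => B s k) 0 = fun i => B i k := by
    funext i
    by_cases hi : i ∈ PA B k
    · exact Subtype.val_injective.extend_apply (fun s : PA B k => B s k) 0 ⟨i, hi⟩
    · rw [Function.extend_apply' _ _ _ (by simpa using hi), Pi.zero_apply]
      exact (by simpa [PA] using hi : B i k = 0).symm
  have hres : residualCoeff k (PA B k) (fun s => B s k) = (1 - B) *ᵥ Pi.single k 1 := by
    rw [residualCoeff, hextend, mulVec_single_one]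
    ext i
    simp [Pi.single_apply, one_apply, eq_comm]
  calc condVar (modelCov B ω) k (PA B k)
      ≤ residualCoeff k (PA B k) (fun s => B s k) ⬝ᵥ
          (modelCov B ω *ᵥ residualCoeff k (PA B k) (fun s => B s k)) :=
        condVar_le_residualCoeff_dotProduct_mulVec (modelCov_posDef hB hω) k _ _
    _ = ω k := by
        rw [dotProduct_modelCov_mulVec, hres, mulVec_mulVec,
          nonsing_inv_mul _ (isUnit_det_one_sub hB), one_mulVec]
        simp [Pi.single_apply]

lemma lt_dotProduct_modelCov_mulVec (hB : ∀ i j, B i j ≠ 0 → i < j) {ω : Fin p → ℝ}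
    (hω : ∀ j, 0 < ω j) {j k : Fin p} (hedge : B j k ≠ 0) {c : Fin p → ℝ} (hcj : c j = 0)
    (hck : ((1 - B)⁻¹ *ᵥ c) k = 1) : ω k < c ⬝ᵥ (modelCov B ω *ᵥ c) := by
  obtain ⟨m, hmk, hm⟩ : ∃ m ≠ k, ((1 - B)⁻¹ *ᵥ c) m ≠ 0 := by
    by_contra! h
    have hv : (1 - B)⁻¹ *ᵥ c = Pi.single k 1 := by
      ext m
      by_cases hm : m = k
      · rw [hm, hck, Pi.single_eq_same]
      · rw [h m hm, Pi.single_eq_of_ne hm]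
    have hc : c = (1 - B) *ᵥ Pi.single k 1 := by
      rw [← hv, mulVec_mulVec, mul_nonsing_inv _ (isUnit_det_one_sub hB), one_mulVec]
    apply hedge
    simpa [hc, mulVec_single_one, one_apply_ne (hB j k hedge).ne] using hcj
  rw [dotProduct_modelCov_mulVec]
  exact lt_sum_mul_sq hω hck hmk hm

variable {σ : Equiv.Perm (Fin p)} {ks : Fin p}

lemma symm_lt_symm_of_reflTransGen (hB : ∀ i j, B i j ≠ 0 → i < j)
    (hmax : ∀ k, ks < k → ∀ i, B i k ≠ 0 → σ.symm i < σ.symm k) {m : Fin p}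
    (h : Relation.ReflTransGen (fun a b => B a b ≠ 0) ks m) (hm : m ≠ ks) :
    σ.symm ks < σ.symm m := by
  induction h with
  | refl => exact absurd rfl hm
  | @tail k m hk hkm ih =>
    have hlt : σ.symm k < σ.symm m :=
      hmax m ((le_of_reflTransGen hB hk).trans_lt (hB k m hkm)) k hkm
    by_cases hks : k = ks
    · exact hks ▸ hlt
    · exact (ih hks).trans hlt

lemma inv_one_sub_mulVec_residualCoeff_PRED_apply_self (hB : ∀ i j, B i j ≠ 0 → i < j)
    (hmax : ∀ k, ks < k → ∀ i, B i k ≠ 0 → σ.symm i < σ.symm k)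
    (b : PRED σ ks → ℝ) :
    ((1 - B)⁻¹ *ᵥ residualCoeff ks (PRED σ ks) b) ks = 1 := by
  have hks : ks ∉ PRED σ ks := by simp [PRED]
  rw [mulVec, dotProduct, Finset.sum_eq_single ks (fun m _ hm => ?_) (by simp)]
  · rw [inv_one_sub_apply_self hB, residualCoeff_apply_of_notMem b hks, Pi.single_eq_same,
      one_mul]
  by_cases hmem : m ∈ PRED σ ks
  · refine mul_eq_zero_of_left (by_contra fun hN => ?_) _
    have hlt := symm_lt_symm_of_reflTransGen hB hmax
      (reflTransGen_of_inv_one_sub_apply_ne_zero hB hN) hm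
    exact hlt.asymm (by simpa [PRED] using hmem)
  · rw [residualCoeff_apply_of_notMem b hmem, Pi.single_eq_of_ne hm, mul_zero]

end Reversal

/-- Suppose the identity is a topological numbering of the true DAG `G*` (encoded by `B`),
`σ` is not consistent with `G*`, and `k*` is the largest node having a parent `j*` with
`σ⁻¹(k*) < σ⁻¹(j*)`. Then the conditional variance of `X_{k*}` given its predecessors
under `σ` is strictly larger than that given its parents in `G*`. -/
theorem stmt14 {p : ℕ} (B : Matrix (Fin p) (Fin p) ℝ) (ω : Fin p → ℝ)
    (hω : ∀ j, 0 < ω j)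
    (hB : ∀ i j, B i j ≠ 0 → i < j)
    (σ : Equiv.Perm (Fin p)) (ks js : Fin p)
    (hedge : B js ks ≠ 0) (hrev : σ.symm ks < σ.symm js)
    (hmax : ∀ k, ks < k → ∀ i, B i k ≠ 0 → σ.symm i < σ.symm k) :
    condVar (modelCov B ω) ks (PA B ks) <
      condVar (modelCov B ω) ks (PRED σ ks) := by
  calc condVar (modelCov B ω) ks (PA B ks) ≤ ω ks := condVar_modelCov_PA_le hB hω ks
    _ < condVar (modelCov B ω) ks (PRED σ ks) := by
        rw [condVar_eq_residualCoeff_dotProduct_mulVec (modelCov_posDef hB hω)]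
        refine lt_dotProduct_modelCov_mulVec hB hω hedge ?_
          (inv_one_sub_mulVec_residualCoeff_PRED_apply_self hB hmax _)
        rw [residualCoeff_apply_of_notMem _ (by simpa [PRED] using hrev.le),
          Pi.single_eq_of_ne (hB js ks hedge).ne]
end

section
/- For any permutation σ, indices i < j, and τ = R2R(σ, i, j), the products of the affected conditional variances agree: ∏_{k=i}^j ω^σ_{σ(k)} = ∏_{k=i}^j ω^τ_{τ(k)}. -/
open Matrix BigOperators

/-- The random-to-random move `R2R(σ, i, j)` (for `i < j`): the element at position `j`
is inserted at position `i`, and the elements at positions `i, …, j-1` are shifted one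
step to the right. -/
noncomputable def R2R {p : ℕ} (σ : Equiv.Perm (Fin p)) (i j : Fin p) : Equiv.Perm (Fin p) :=
  σ * ((Finset.Icc i j).sort (· ≤ ·)).reverse.formPerm

/-!
Both products telescope. By the Schur complement formula, the conditional variance of the
element at position `k` given its predecessors is the ratio of the principal minors of `S` on
the first `k + 1` and the first `k` elements of the ordering, so each product equals the minor on
the first `j + 1` elements divided by the minor on the first `i` elements. `R2R σ i j` only
permutes the positions `i, …, j`, so these two sets of elements are the same for `σ` and for
`R2R σ i j`.
-/

open Finset

lemma Finset.prod_fin_Icc_mul_eq {M : Type*} [CommMonoid M] {p : ℕ} {a : Fin p → M}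
    {m : ℕ → M} (h : ∀ k, a k * m k = m (k + 1)) {i j : Fin p} (hij : i ≤ j) :
    (∏ k ∈ Icc i j, a k) * m i = m (j + 1) := by
  rw [prod_fin_Icc_eq_prod_nat_Icc]
  obtain ⟨j, hj⟩ := j
  simp only [Fin.le_def] at hij ⊢
  induction j, hij using Nat.le_induction with
  | base => simp [hj, h]
  | succ n hin ih =>
    rw [prod_Icc_succ_top (by omega), mul_right_comm, ih (by omega), dif_pos hj]
    exact (mul_comm _ _).trans (h ⟨n + 1, hj⟩)

lemma Equiv.Perm.val_apply_lt_iff_of_support_subset {p : ℕ} {π : Equiv.Perm (Fin p)}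
    {i j : Fin p} (hπ : π.support ⊆ Icc i j) {n : ℕ} (hn : n ≤ i ∨ j < n) (y : Fin p) :
    (π y : ℕ) < n ↔ (y : ℕ) < n := by
  by_cases hy : y ∈ π.support
  · have hy' := mem_Icc.1 (hπ hy)
    have hπy := mem_Icc.1 (hπ (Equiv.Perm.apply_mem_support.2 hy))
    simp only [Fin.le_def] at hy' hπy
    omega
  · rw [Equiv.Perm.notMem_support.1 hy]

namespace Matrix

variable {p : ℕ}

noncomputable def principalMinor (S : Matrix (Fin p) (Fin p) ℝ) (A : Finset (Fin p)) : ℝ :=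
  (S.submatrix (Subtype.val : A → Fin p) Subtype.val).det

lemma PosDef.principalMinor_pos {S : Matrix (Fin p) (Fin p) ℝ} (hS : S.PosDef)
    (A : Finset (Fin p)) : 0 < S.principalMinor A :=
  (hS.submatrix Subtype.val_injective).det_pos

lemma PosDef.condVar_mul_principalMinor {S : Matrix (Fin p) (Fin p) ℝ} (hS : S.PosDef)
    {j : Fin p} {A : Finset (Fin p)} (hj : j ∉ A) :
    condVar S j A * S.principalMinor A = S.principalMinor (insert j A) := by
  set B := S.submatrix (Subtype.val : A → Fin p) Subtype.val
  have : Invertible B := (hS.submatrix Subtype.val_injective).isUnit.invertible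
  let e : (insert j A : Finset (Fin p)) ≃ (A : Set (Fin p)) ⊕ PUnit :=
    (Equiv.subtypeEquivRight fun x => by simp).trans (Equiv.Set.insert (a := j) (by simpa))
  have hblocks : S.submatrix (Subtype.val ∘ e.symm) (Subtype.val ∘ e.symm) =
      fromBlocks B (of fun a _ => S a j) (of fun _ b => S j b) (of fun _ _ => S j j) := by
    ext (a | a) (b | b) <;> rfl
  rw [principalMinor, principalMinor, ← det_submatrix_equiv_self e.symm, submatrix_submatrix,
    hblocks, det_fromBlocks₁₁, mul_comm]
  congr 1
  rw [det_unique]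
  simp only [condVar, sub_apply, of_apply, mul_apply, invOf_eq_nonsing_inv, Finset.sum_mul]
  exact congrArg (S j j - ·) Finset.sum_comm

end Matrix

section Prefix

variable {p : ℕ}

def prefixSet (σ : Equiv.Perm (Fin p)) (n : ℕ) : Finset (Fin p) :=
  univ.filter fun x => (σ.symm x : ℕ) < n

lemma PRED_apply (σ : Equiv.Perm (Fin p)) (k : Fin p) : PRED σ (σ k) = prefixSet σ k := by
  simp only [PRED, Equiv.symm_apply_apply]
  rfl

lemma apply_notMem_prefixSet (σ : Equiv.Perm (Fin p)) (k : Fin p) : σ k ∉ prefixSet σ k := by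
  simp [prefixSet]

lemma insert_apply_prefixSet (σ : Equiv.Perm (Fin p)) (k : Fin p) :
    insert (σ k) (prefixSet σ k) = prefixSet σ (k + 1) := by
  ext x
  simp only [prefixSet, mem_insert, mem_filter, mem_univ, true_and, Nat.lt_succ_iff_lt_or_eq,
    Fin.val_inj, Equiv.symm_apply_eq, or_comm]

lemma prefixSet_mul (σ π : Equiv.Perm (Fin p)) {n : ℕ}
    (hπ : ∀ y, (π.symm y : ℕ) < n ↔ (y : ℕ) < n) : prefixSet (σ * π) n = prefixSet σ n := by
  ext x
  simp [prefixSet, Equiv.Perm.mul_def, hπ]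

end Prefix

lemma Matrix.PosDef.prod_condVar_PRED_mul {p : ℕ} {S : Matrix (Fin p) (Fin p) ℝ}
    (hS : S.PosDef) (σ : Equiv.Perm (Fin p)) {i j : Fin p} (hij : i ≤ j) :
    (∏ k ∈ Icc i j, condVar S (σ k) (PRED σ (σ k))) * S.principalMinor (prefixSet σ i) =
      S.principalMinor (prefixSet σ (j + 1)) := by
  refine prod_fin_Icc_mul_eq (m := fun n => S.principalMinor (prefixSet σ n)) (fun k => ?_) hij
  rw [PRED_apply, hS.condVar_mul_principalMinor (apply_notMem_prefixSet σ k),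
    insert_apply_prefixSet]

lemma support_formPerm_sort_Icc_reverse_subset {p : ℕ} (i j : Fin p) :
    (((Icc i j).sort (· ≤ ·)).reverse.formPerm).support ⊆ Icc i j :=
  (List.support_formPerm_le _).trans fun x => by simp

lemma prefixSet_R2R {p : ℕ} (σ : Equiv.Perm (Fin p)) {i j : Fin p} {n : ℕ}
    (hn : n ≤ i ∨ j < n) : prefixSet (R2R σ i j) n = prefixSet σ n := by
  refine prefixSet_mul _ _ (Equiv.Perm.val_apply_lt_iff_of_support_subset ?_ hn)
  rw [← Equiv.Perm.inv_def, Equiv.Perm.support_inv]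
  exact support_formPerm_sort_Icc_reverse_subset i j

/-- For `τ = R2R(σ, i, j)`, the products of the affected conditional variances agree:
`∏_{k=i}^j ω^σ_{σ(k)} = ∏_{k=i}^j ω^τ_{τ(k)}`. -/
theorem stmt17 {p : ℕ} (S : Matrix (Fin p) (Fin p) ℝ) (hS : S.PosDef)
    (σ : Equiv.Perm (Fin p)) (i j : Fin p) (hij : i < j) :
    ∏ k ∈ Finset.Icc i j, condVar S (σ k) (PRED σ (σ k)) =
      ∏ k ∈ Finset.Icc i j,
        condVar S ((R2R σ i j) k) (PRED (R2R σ i j) ((R2R σ i j) k)) := by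
  have hσ := hS.prod_condVar_PRED_mul σ hij.le
  have hτ := hS.prod_condVar_PRED_mul (R2R σ i j) hij.le
  rw [prefixSet_R2R σ (Or.inl le_rfl), prefixSet_R2R σ (Or.inr (Nat.lt_succ_self _))] at hτ
  exact mul_right_cancel₀ (hS.principalMinor_pos _).ne' (hσ.trans hτ.symm)
end
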